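/- arXiv:1312.3357 — 9 statements merged into one kernel-verified Lean document; each statement's English description precedes it below -/
import Mathlib

section
/- Effect of adding a mean on chaos coefficients: Let 𝕋 be a finite index set, ψ a kernel with multi-linear polynomial Ψ, μ = (μ_i)_{i∈𝕋} real numbers with c_μ := Σ_{i∈𝕋} μ_i², and let Ψ̃(x) := Ψ(x+μ) with kernel ψ̃(J) = Σ_{I⊇J} ψ(I)·μ^{I∖J}. Then for every ε > 0: (i) C_{Ψ̃} := Σ_{J⊆𝕋} ψ̃(J)² ≤ e^{c_μ/ε}·C_{Ψ^{(ε)}}, where C_{Ψ^{(ε)}} = Σ_{I⊆𝕋} (1+ε)^{|I|}·ψ(I)²; and (ii) for every j ∈ 𝕋, Inf_j[Ψ̃] := Σ_{J∋j} ψ̃(J)² ≤ e^{c_μ/ε}·Inf_j[Ψ^{(ε)}], where Inf_j[Ψ^{(ε)}] = Σ_{I∋j} (1+ε)^{|I|}·ψ(I)². -/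
/-!
For fixed `J`, Cauchy–Schwarz with the weights `ε ^ |I \ J|` bounds `ψ̃(J)²` by
`(∑_{I ⊇ J} ε ^ |I \ J| ψ(I)²) · ∑_{K} ∏_{i ∈ K} μᵢ² / ε`, and the second factor is at most
`∏ᵢ (1 + μᵢ² / ε) ≤ exp (c_μ / ε)`. Summing over `J` in an upward closed family and exchanging
the sums, each `ψ(I)²` collects at most `∑_{J ⊆ I} ε ^ |I \ J| = (1 + ε) ^ |I|`.
-/

open Finset

section Shift

variable {ι : Type*} [DecidableEq ι]

lemma sum_powerset_pow_card_sdiff {R : Type*} [CommSemiring R] (a : R) (I : Finset ι) :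
    ∑ J ∈ I.powerset, a ^ (I \ J).card = (1 + a) ^ I.card := by
  rw [← sum_pow_mul_eq_add_pow]
  refine sum_congr rfl fun J hJ => ?_
  rw [one_pow, one_mul, card_sdiff_of_subset (mem_powerset.1 hJ)]

variable [Fintype ι]

/-- The kernel `ψ̃` of `x ↦ Ψ (x + μ)`. -/
def shiftedKernel (ψ : Finset ι → ℝ) (μ : ι → ℝ) (J : Finset ι) : ℝ :=
  ∑ I ∈ univ.filter (fun I : Finset ι => J ⊆ I), ψ I * ∏ i ∈ I \ J, μ i

lemma sum_superset_prod_sdiff_le_exp (g : ι → ℝ) (hg : ∀ i, 0 ≤ g i) (J : Finset ι) :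
    ∑ I ∈ univ.filter (fun I : Finset ι => J ⊆ I), ∏ i ∈ I \ J, g i ≤ Real.exp (∑ i, g i) := by
  have hinj : Set.InjOn (· \ J) (univ.filter (fun I : Finset ι => J ⊆ I) : Set (Finset ι)) := by
    intro I₁ h₁ I₂ h₂ h
    simp only [coe_filter, mem_univ, true_and, Set.mem_ofPred_eq] at h₁ h₂
    rw [← sdiff_union_of_subset h₁, ← sdiff_union_of_subset h₂]
    exact congrArg (· ∪ J) h
  calc ∑ I ∈ univ.filter (fun I : Finset ι => J ⊆ I), ∏ i ∈ I \ J, g i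
      = ∑ K ∈ (univ.filter (fun I : Finset ι => J ⊆ I)).image (· \ J), ∏ i ∈ K, g i :=
        (sum_image (f := fun K => ∏ i ∈ K, g i) hinj).symm
    _ ≤ ∑ K ∈ (univ : Finset ι).powerset, ∏ i ∈ K, g i :=
        sum_le_sum_of_subset_of_nonneg (fun K _ => mem_powerset.2 (subset_univ K))
          fun K _ _ => prod_nonneg fun i _ => hg i
    _ = ∏ i, (1 + g i) := (prod_one_add _).symm
    _ ≤ Real.exp (∑ i, g i) := Real.prod_one_add_le_exp_sum _ hg

lemma sq_shiftedKernel_le (ψ : Finset ι → ℝ) (μ : ι → ℝ) {ε : ℝ} (hε : 0 < ε) (J : Finset ι) :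
    shiftedKernel ψ μ J ^ 2 ≤ Real.exp ((∑ i, μ i ^ 2) / ε) *
      ∑ I ∈ univ.filter (fun I : Finset ι => J ⊆ I), ε ^ (I \ J).card * ψ I ^ 2 := by
  have hsq : ∀ I : Finset ι, (ψ I * ∏ i ∈ I \ J, μ i) ^ 2 =
      (ε ^ (I \ J).card * ψ I ^ 2) * ∏ i ∈ I \ J, μ i ^ 2 / ε := by
    intro I
    rw [prod_div_distrib, prod_const, prod_pow]
    field_simp
  rw [mul_comm, shiftedKernel]
  refine (sum_sq_le_sum_mul_sum_of_sq_le_mul _ (fun I _ => by positivity)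
    (fun I _ => prod_nonneg fun i _ => by positivity) fun I _ => (hsq I).le).trans ?_
  refine mul_le_mul_of_nonneg_left ?_ (sum_nonneg fun I _ => by positivity)
  rw [sum_div]
  exact sum_superset_prod_sdiff_le_exp _ (fun i => by positivity) J

lemma sum_sq_shiftedKernel_le (ψ : Finset ι → ℝ) (μ : ι → ℝ) {ε : ℝ} (hε : 0 < ε)
    (𝒜 : Finset (Finset ι)) (h𝒜 : IsUpperSet (𝒜 : Set (Finset ι))) :
    ∑ J ∈ 𝒜, shiftedKernel ψ μ J ^ 2 ≤
      Real.exp ((∑ i, μ i ^ 2) / ε) * ∑ I ∈ 𝒜, (1 + ε) ^ I.card * ψ I ^ 2 := by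
  have hswap : ∑ J ∈ 𝒜, ∑ I ∈ univ.filter (fun I : Finset ι => J ⊆ I), ε ^ (I \ J).card * ψ I ^ 2
      = ∑ I ∈ 𝒜, ∑ J ∈ I.powerset.filter (· ∈ 𝒜), ε ^ (I \ J).card * ψ I ^ 2 := by
    refine sum_comm' fun J I => ?_
    simp only [mem_filter, mem_univ, true_and, mem_powerset]
    exact ⟨fun ⟨hJ, hJI⟩ => ⟨⟨hJI, hJ⟩, h𝒜 hJI hJ⟩, fun ⟨⟨hJI, hJ⟩, _⟩ => ⟨hJ, hJI⟩⟩
  calc ∑ J ∈ 𝒜, shiftedKernel ψ μ J ^ 2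
      ≤ ∑ J ∈ 𝒜, Real.exp ((∑ i, μ i ^ 2) / ε) *
          ∑ I ∈ univ.filter (fun I : Finset ι => J ⊆ I), ε ^ (I \ J).card * ψ I ^ 2 :=
        sum_le_sum fun J _ => sq_shiftedKernel_le ψ μ hε J
    _ = Real.exp ((∑ i, μ i ^ 2) / ε) *
          ∑ I ∈ 𝒜, ∑ J ∈ I.powerset.filter (· ∈ 𝒜), ε ^ (I \ J).card * ψ I ^ 2 := by
        rw [← mul_sum, hswap]
    _ ≤ Real.exp ((∑ i, μ i ^ 2) / ε) * ∑ I ∈ 𝒜, (1 + ε) ^ I.card * ψ I ^ 2 := by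
        refine mul_le_mul_of_nonneg_left (sum_le_sum fun I _ => ?_) (Real.exp_pos _).le
        rw [← sum_powerset_pow_card_sdiff, sum_mul]
        exact sum_le_sum_of_subset_of_nonneg (filter_subset _ _) fun J _ _ => by positivity

end Shift

/-- **Effect of adding a mean on chaos coefficients.**
For a kernel `ψ` on a finite index set, shift `μ` with `c_μ = ∑ i, μ i ^ 2`, and
shifted kernel `ψ̃(J) = ∑_{I ⊇ J} ψ I * μ^{I \ J}`, for every `ε > 0`:
(i) `C_{Ψ̃} ≤ exp (c_μ / ε) * C_{Ψ^{(ε)}}`, and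
(ii) for every `j`, `Inf_j[Ψ̃] ≤ exp (c_μ / ε) * Inf_j[Ψ^{(ε)}]`. -/
theorem shifted_kernel_bounds
    {ι : Type*} [Fintype ι] [DecidableEq ι]
    (ψ : Finset ι → ℝ) (μ : ι → ℝ) (ε : ℝ) (hε : 0 < ε) :
    ((∑ J : Finset ι,
        (∑ I ∈ univ.filter (fun I : Finset ι => J ⊆ I), ψ I * ∏ i ∈ I \ J, μ i) ^ 2)
      ≤ Real.exp ((∑ i, μ i ^ 2) / ε) * ∑ I : Finset ι, (1 + ε) ^ I.card * ψ I ^ 2)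
    ∧
    (∀ j : ι,
      (∑ J ∈ univ.filter (fun J : Finset ι => j ∈ J),
          (∑ I ∈ univ.filter (fun I : Finset ι => J ⊆ I), ψ I * ∏ i ∈ I \ J, μ i) ^ 2)
        ≤ Real.exp ((∑ i, μ i ^ 2) / ε) *
            ∑ I ∈ univ.filter (fun I : Finset ι => j ∈ I), (1 + ε) ^ I.card * ψ I ^ 2) := by
  refine ⟨sum_sq_shiftedKernel_le ψ μ hε univ (by rw [coe_univ]; exact isUpperSet_univ),
    fun j => ?_⟩
  refine sum_sq_shiftedKernel_le ψ μ hε _ fun J I hJI hJ => ?_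
  simp only [coe_filter, mem_univ, true_and, Set.mem_ofPred_eq] at hJ ⊢
  exact hJI hJ
end

section
/- Second-moment bound for shifted polynomial chaos: Let 𝕋 be a finite index set, let ζ = (ζ_i)_{i∈𝕋} be independent real random variables with E[ζ_i] = 0 and Var(ζ_i) = σ² for all i, let μ = (μ_i)_{i∈𝕋} be real numbers, and let ψ be a kernel. Then for every ε > 0, E[ ( Σ_{I⊆𝕋} ψ(I)·∏_{i∈I}(ζ_i + μ_i) )² ] ≤ exp( (1/(ε σ²))·Σ_{i∈𝕋} μ_i² ) · Σ_{I⊆𝕋} (1+ε)^{|I|}·(σ²)^{|I|}·ψ(I)². -/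
open MeasureTheory ProbabilityTheory Finset

/-!
Expanding `∏ i ∈ I, (ζ i + μ i)` rewrites the chaos as `∑ J, c J * ζ^J` with
`c J = ∑_{I ⊇ J} ψ I * μ^(I \ J)` (`shiftedCoeff`). By independence, the monomials `ζ^J` are
orthogonal with `E[(ζ^J)²] = σ2^|J|`, so the second moment is `∑ J, c J ^ 2 * σ2^|J|`.
Cauchy–Schwarz with weights `(ε σ2)^|I \ J|` bounds `c J ^ 2` by
`∏ i, (1 + μ i ^ 2 / (ε σ2)) ≤ exp (∑ i, μ i ^ 2 / (ε σ2))` times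
`∑_{I ⊇ J} (ε σ2)^|I \ J| * ψ I ^ 2`, and summing over `J ⊆ I` produces the binomial factor
`(σ2 + ε σ2)^|I|`.
-/

namespace Finset

variable {ι R : Type*} [Fintype ι] [DecidableEq ι]

theorem sum_sum_powerset_eq_sum_sum_superset {M : Type*} [AddCommMonoid M]
    (F : Finset ι → Finset ι → M) :
    ∑ I, ∑ J ∈ I.powerset, F I J = ∑ J, ∑ I with J ⊆ I, F I J :=
  sum_comm' fun I J => by simp

theorem sum_superset_prod_sdiff_le_prod_one_add [CommSemiring R] [PartialOrder R]
    [IsOrderedRing R] {a : ι → R} (ha : ∀ i, 0 ≤ a i) (J : Finset ι) :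
    ∑ I with J ⊆ I, ∏ i ∈ I \ J, a i ≤ ∏ i, (1 + a i) := by
  have hinj : Set.InjOn (· \ J) {I | J ⊆ I} := fun I₁ h₁ I₂ h₂ h => by
    rw [← sdiff_union_of_subset h₁, ← sdiff_union_of_subset h₂]
    exact congrArg (· ∪ J) h
  rw [prod_one_add, powerset_univ,
    ← sum_image (f := fun K => ∏ i ∈ K, a i) (g := (· \ J)) (by simpa using hinj)]
  exact sum_le_sum_of_subset_of_nonneg (subset_univ _) fun _ _ _ => prod_nonneg fun i _ => ha i

theorem sum_pow_card_mul_sum_superset [CommSemiring R] (x δ : R) (w : Finset ι → R) :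
    ∑ J, x ^ #J * ∑ I with J ⊆ I, δ ^ #(I \ J) * w I = ∑ I, (x + δ) ^ #I * w I := by
  simp_rw [mul_sum, ← sum_sum_powerset_eq_sum_sum_superset, ← sum_pow_mul_eq_add_pow, sum_mul]
  refine sum_congr rfl fun I _ => sum_congr rfl fun J hJ => ?_
  rw [card_sdiff_of_subset (mem_powerset.1 hJ)]
  ring

theorem prod_mul_prod_eq_prod_pow {M : Type*} [CommMonoid M] (x : ι → M) (J J' : Finset ι) :
    (∏ i ∈ J, x i) * ∏ i ∈ J', x i
      = ∏ i, x i ^ ((if i ∈ J then 1 else 0) + if i ∈ J' then 1 else 0) := by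
  simp_rw [pow_add, prod_mul_distrib, pow_ite, pow_one, pow_zero, prod_ite_mem, univ_inter]

theorem prod_ite_add_ite_eq_ite {M : Type*} [CommMonoidWithZero M] (m : ι → ℕ → M)
    (h0 : ∀ i, m i 0 = 1) (h1 : ∀ i, m i 1 = 0) (J J' : Finset ι) :
    ∏ i, m i ((if i ∈ J then 1 else 0) + if i ∈ J' then 1 else 0)
      = if J = J' then ∏ i ∈ J, m i 2 else 0 := by
  split_ifs with hJ
  · subst hJ
    simp_rw [← two_mul, mul_ite, mul_one, mul_zero, apply_ite, h0, prod_ite_mem, univ_inter]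
  · obtain ⟨i, hi⟩ : ∃ i, ¬(i ∈ J ↔ i ∈ J') := by
      by_contra! h
      exact hJ (ext h)
    refine prod_eq_zero (mem_univ i) ?_
    by_cases hiJ : i ∈ J <;> simp_all

end Finset

section ShiftedCoeff

variable {ι R : Type*} [Fintype ι] [DecidableEq ι]

def shiftedCoeff [CommSemiring R] (ψ : Finset ι → R) (μ : ι → R) (J : Finset ι) : R :=
  ∑ I with J ⊆ I, ψ I * ∏ i ∈ I \ J, μ i

theorem sum_mul_prod_add_eq_sum_shiftedCoeff_mul_prod [CommSemiring R] (ψ : Finset ι → R)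
    (μ x : ι → R) :
    ∑ I, ψ I * ∏ i ∈ I, (x i + μ i) = ∑ J, shiftedCoeff ψ μ J * ∏ i ∈ J, x i := by
  simp_rw [prod_add, mul_sum, sum_sum_powerset_eq_sum_sum_superset, shiftedCoeff, sum_mul]
  exact sum_congr rfl fun _ _ => sum_congr rfl fun _ _ => by ring

theorem shiftedCoeff_sq_le {δ : ℝ} (hδ : 0 < δ) (ψ : Finset ι → ℝ) (μ : ι → ℝ)
    (J : Finset ι) :
    shiftedCoeff ψ μ J ^ 2
      ≤ Real.exp ((∑ i, μ i ^ 2) / δ) * ∑ I with J ⊆ I, δ ^ #(I \ J) * ψ I ^ 2 := by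
  have hweights : ∀ I, (ψ I * ∏ i ∈ I \ J, μ i) ^ 2
      = δ ^ #(I \ J) * ψ I ^ 2 * ∏ i ∈ I \ J, μ i ^ 2 / δ := fun I => by
    rw [prod_div_distrib, prod_pow, prod_const]
    field_simp
  have hexp :
      ∑ I with J ⊆ I, ∏ i ∈ I \ J, μ i ^ 2 / δ ≤ Real.exp ((∑ i, μ i ^ 2) / δ) := by
    rw [sum_div]
    exact (sum_superset_prod_sdiff_le_prod_one_add (fun i => by positivity) J).trans
      (Real.prod_one_add_le_exp_sum _ fun i => by positivity)
  rw [mul_comm]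
  exact (sum_sq_le_sum_mul_sum_of_sq_le_mul _ (fun I _ => by positivity)
    (fun I _ => by positivity) fun I _ => (hweights I).le).trans
    (mul_le_mul_of_nonneg_left hexp (sum_nonneg fun I _ => by positivity))

end ShiftedCoeff

section Orthogonality

variable {Ω ι : Type*} {mΩ : MeasurableSpace Ω} {P : Measure Ω}

theorem ProbabilityTheory.iIndepFun.integrable_fun_finset_prod {X : ι → Ω → ℝ}
    (hX : iIndepFun X P) (hint : ∀ i, Integrable (X i) P) (s : Finset ι) :
    Integrable (fun ω => ∏ i ∈ s, X i ω) P := by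
  classical
  have := hX.isProbabilityMeasure
  induction s using Finset.induction_on with
  | empty => simp
  | insert i s hi ih =>
    have hindep := hX.indepFun_finsetProd_of_notMem₀ (fun j => (hint j).aemeasurable) hi
    simp_rw [prod_insert hi]
    simpa only [Pi.mul_def, prod_apply, mul_comm] using
      hindep.integrable_mul (by rwa [prod_fn]) (hint i)

theorem MeasureTheory.MemLp.integrable_pow_of_le_two [IsFiniteMeasure P] {f : Ω → ℝ}
    (hf : MemLp f 2 P) {n : ℕ} (hn : n ≤ 2) : Integrable (fun ω => f ω ^ n) P := by
  interval_cases n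
  · simp
  · simpa using hf.integrable one_le_two
  · exact hf.integrable_sq

variable [Fintype ι] [DecidableEq ι] {ζ : ι → Ω → ℝ} {σ2 : ℝ}

theorem integrable_prod_mul_prod_of_iIndepFun (hindep : iIndepFun ζ P)
    (hL2 : ∀ i, MemLp (ζ i) 2 P) (J J' : Finset ι) :
    Integrable (fun ω => (∏ i ∈ J, ζ i ω) * ∏ i ∈ J', ζ i ω) P := by
  have := hindep.isProbabilityMeasure
  simp_rw [prod_mul_prod_eq_prod_pow]
  refine (hindep.comp (fun i x => x ^ _) fun i => measurable_id.pow_const _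
    ).integrable_fun_finset_prod (fun i => (hL2 i).integrable_pow_of_le_two ?_) univ
  split_ifs <;> norm_num

theorem integral_prod_mul_prod_of_iIndepFun (hindep : iIndepFun ζ P)
    (hL2 : ∀ i, MemLp (ζ i) 2 P) (hmean : ∀ i, ∫ ω, ζ i ω ∂P = 0)
    (hvar : ∀ i, ∫ ω, ζ i ω ^ 2 ∂P = σ2) (J J' : Finset ι) :
    ∫ ω, (∏ i ∈ J, ζ i ω) * ∏ i ∈ J', ζ i ω ∂P = if J = J' then σ2 ^ #J else 0 := by
  have := hindep.isProbabilityMeasure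
  simp_rw [prod_mul_prod_eq_prod_pow]
  rw [hindep.integral_fun_prod_comp (fun i => (hL2 i).aemeasurable)
      fun i => (continuous_pow _).aestronglyMeasurable,
    prod_ite_add_ite_eq_ite (fun i n => ∫ ω, ζ i ω ^ n ∂P) (by simp) (by simpa using hmean)]
  simp [hvar]

theorem integral_sq_sum_mul_prod_of_iIndepFun (hindep : iIndepFun ζ P)
    (hL2 : ∀ i, MemLp (ζ i) 2 P) (hmean : ∀ i, ∫ ω, ζ i ω ∂P = 0)
    (hvar : ∀ i, ∫ ω, ζ i ω ^ 2 ∂P = σ2) (c : Finset ι → ℝ) :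
    ∫ ω, (∑ J, c J * ∏ i ∈ J, ζ i ω) ^ 2 ∂P = ∑ J, c J ^ 2 * σ2 ^ #J := by
  have hexpand : ∀ ω, (∑ J, c J * ∏ i ∈ J, ζ i ω) ^ 2
      = ∑ J, ∑ J', c J * c J' * ((∏ i ∈ J, ζ i ω) * ∏ i ∈ J', ζ i ω) := fun ω => by
    rw [sq, sum_mul_sum]
    exact sum_congr rfl fun _ _ => sum_congr rfl fun _ _ => by ring
  have hint := fun J J' => (integrable_prod_mul_prod_of_iIndepFun hindep hL2 J J').const_mul
    (c J * c J')
  simp_rw [hexpand]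
  rw [integral_finsetSum _ fun J _ => integrable_finsetSum _ fun J' _ => hint J J']
  refine sum_congr rfl fun J _ => ?_
  simp_rw [integral_finsetSum _ fun J' _ => hint J J', integral_const_mul,
    integral_prod_mul_prod_of_iIndepFun hindep hL2 hmean hvar, mul_ite, mul_zero, sum_ite_eq,
    if_pos (mem_univ _)]
  ring

end Orthogonality

theorem second_moment_shifted_polynomial_chaos_general
    {Ω : Type*} [MeasureSpace Ω]
    {ι : Type*} [Fintype ι]
    (ζ : ι → Ω → ℝ)
    (hindep : iIndepFun ζ ℙ)
    (hL2 : ∀ i, MemLp (ζ i) 2 ℙ)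
    (σ2 : ℝ) (hσ2 : 0 < σ2)
    (hmean : ∀ i, ∫ a, ζ i a ∂ℙ = 0)
    (hvar : ∀ i, ∫ a, (ζ i a) ^ 2 ∂ℙ = σ2)
    (μ : ι → ℝ) (ψ : Finset ι → ℝ) (ε : ℝ) (hε : 0 < ε) :
    ∫ a, (∑ I : Finset ι, ψ I * ∏ i ∈ I, (ζ i a + μ i)) ^ 2 ∂ℙ
      ≤ Real.exp ((∑ i, μ i ^ 2) / (ε * σ2)) *
          ∑ I : Finset ι, (1 + ε) ^ I.card * σ2 ^ I.card * ψ I ^ 2 := by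
  classical
  simp_rw [sum_mul_prod_add_eq_sum_shiftedCoeff_mul_prod ψ μ,
    integral_sq_sum_mul_prod_of_iIndepFun hindep hL2 hmean hvar]
  calc ∑ J, shiftedCoeff ψ μ J ^ 2 * σ2 ^ #J
      ≤ ∑ J, Real.exp ((∑ i, μ i ^ 2) / (ε * σ2)) *
          (∑ I with J ⊆ I, (ε * σ2) ^ #(I \ J) * ψ I ^ 2) * σ2 ^ #J :=
        sum_le_sum fun J _ => mul_le_mul_of_nonneg_right
          (shiftedCoeff_sq_le (mul_pos hε hσ2) ψ μ J) (by positivity)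
    _ = Real.exp ((∑ i, μ i ^ 2) / (ε * σ2)) * ∑ I, (σ2 + ε * σ2) ^ #I * ψ I ^ 2 := by
        rw [← sum_pow_card_mul_sum_superset, mul_sum]
        exact sum_congr rfl fun _ _ => by ring
    _ = _ := by simp_rw [← one_add_mul, mul_pow]

/-- **Second-moment bound for shifted polynomial chaos.**
For independent random variables `ζ i` with zero mean and common variance `σ2`,
a shift `μ`, a kernel `ψ` and any `ε > 0`,
`E[(∑ I, ψ I * ∏_{i ∈ I} (ζ i + μ i))²]
  ≤ exp ((∑ i, μ i ²) / (ε σ2)) * ∑ I, (1+ε)^{|I|} σ2^{|I|} ψ(I)²`. -/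
theorem second_moment_shifted_polynomial_chaos
    {Ω : Type*} [MeasureSpace Ω] [IsProbabilityMeasure (ℙ : Measure Ω)]
    {ι : Type*} [Fintype ι] [DecidableEq ι]
    (ζ : ι → Ω → ℝ)
    (hmeas : ∀ i, Measurable (ζ i))
    (hindep : iIndepFun ζ ℙ)
    (hL2 : ∀ i, MemLp (ζ i) 2 ℙ)
    (σ2 : ℝ) (hσ2 : 0 < σ2)
    (hmean : ∀ i, ∫ a, ζ i a ∂ℙ = 0)
    (hvar : ∀ i, ∫ a, (ζ i a) ^ 2 ∂ℙ = σ2)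
    (μ : ι → ℝ) (ψ : Finset ι → ℝ) (ε : ℝ) (hε : 0 < ε) :
    ∫ a, (∑ I : Finset ι, ψ I * ∏ i ∈ I, (ζ i a + μ i)) ^ 2 ∂ℙ
      ≤ Real.exp ((∑ i, μ i ^ 2) / (ε * σ2)) *
          ∑ I : Finset ι, (1 + ε) ^ I.card * σ2 ^ I.card * ψ I ^ 2 :=
  second_moment_shifted_polynomial_chaos_general ζ hindep hL2 σ2 hσ2 hmean hvar μ ψ ε hε
end

section
/- L² convergence of zero-mean polynomial chaos over a countable index set: Let 𝕋 be a countably infinite index set, let ζ = (ζ_i)_{i∈𝕋} be independent real random variables with E[ζ_i] = 0 and Var(ζ_i) = σ² for all i, and let ψ : 𝒫^fin(𝕋) → ℝ be a kernel on the finite subsets of 𝕋 satisfying Σ_{I∈𝒫^fin(𝕋)} (σ²)^{|I|}·ψ(I)² < ∞. Then for every increasing sequence of finite sets Λ_N ⊆ 𝕋 with ∪_N Λ_N = 𝕋, the partial sums S_N := Σ_{I⊆Λ_N} ψ(I)·∏_{i∈I} ζ_i converge in L² as N → ∞, and the limit is (almost surely) the same for every such exhausting sequence. -/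
open MeasureTheory ProbabilityTheory Finset Filter

/-!
The monomials `ζ^I` are orthogonal in `L²`, with `‖ζ^I‖² = σ²^|I|`: writing
`ζ^I ζ^J = ∏_{i ∈ I ∪ J} (ζ_i² if i ∈ I ∩ J, else ζ_i)`, independence factorises the
expectation, and a factor `E ζ_i = 0` survives unless `I = J`. Hence the chaos terms
`ψ(I) ζ^I` form an orthogonal family with summable squared norms, so they are
unconditionally summable in the Hilbert space `L²`. The partial sums over the powersets of an
exhausting sequence `Λ_N` run through a cofinal sequence of finite sets of indices, so they
converge to the same sum `S`.
-/

open scoped InnerProductSpace ENNReal Topology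

theorem Finset.prod_mul_prod_eq_prod_union_ite {ι M : Type*} [CommMonoid M] [DecidableEq ι]
    (f : ι → M) (I J : Finset ι) :
    (∏ i ∈ I, f i) * ∏ i ∈ J, f i = ∏ i ∈ I ∪ J, if i ∈ I ∩ J then f i ^ 2 else f i := by
  have hsplit : ∀ i, (if i ∈ I ∩ J then f i ^ 2 else f i) = f i * if i ∈ I ∩ J then f i else 1 :=
    fun i => by split_ifs <;> simp [sq]
  rw [← prod_union_inter, prod_congr rfl fun i _ => hsplit i, prod_mul_distrib, prod_ite_mem,
    inter_eq_right.2 (inter_subset_left.trans subset_union_left)]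

theorem summable_of_pairwise_inner_eq_zero {𝕜 E ι : Type*} [RCLike 𝕜] [NormedAddCommGroup E]
    [InnerProductSpace 𝕜 E] [CompleteSpace E] {v : ι → E}
    (hv : Pairwise fun i j => ⟪v i, v j⟫_𝕜 = 0) (h : Summable fun i => ‖v i‖ ^ 2) :
    Summable v := by
  have hV : OrthogonalFamily 𝕜 (fun i => 𝕜 ∙ v i) fun i => (𝕜 ∙ v i).subtypeₗᵢ :=
    OrthogonalFamily.of_pairwise fun i j hij => Submodule.isOrtho_span.2 (by simpa using hv hij)
  exact (hV.summable_iff_norm_sq_summable fun i => ⟨v i, Submodule.mem_span_singleton_self _⟩).2 h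

namespace MeasureTheory

variable {α : Type*} {m : MeasurableSpace α} {μ : Measure α}

theorem L2.real_inner_toLp {f g : α → ℝ} (hf : MemLp f 2 μ) (hg : MemLp g 2 μ) :
    ⟪hf.toLp f, hg.toLp g⟫_ℝ = ∫ a, f a * g a ∂μ := by
  rw [L2.inner_def]
  refine integral_congr_ae ?_
  filter_upwards [hf.coeFn_toLp, hg.coeFn_toLp] with a hfa hga
  simp [hfa, hga, mul_comm]

theorem tendsto_eLpNorm_finset_sum_sub_of_hasSum {β γ E : Type*} [NormedAddCommGroup E]
    {p : ℝ≥0∞} [Fact (1 ≤ p)] {f : γ → α → E} (hf : ∀ i, MemLp (f i) p μ) {S : Lp E p μ}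
    (hS : HasSum (fun i => (hf i).toLp (f i)) S) {l : Filter β} {s : β → Finset γ}
    (hs : Tendsto s l atTop) :
    Tendsto (fun n => eLpNorm (fun a => (∑ i ∈ s n, f i a) - S a) p μ) l (𝓝 0) := by
  refine ((Lp.tendsto_Lp_iff_tendsto_eLpNorm' _ S).1 (hS.comp hs)).congr fun n => ?_
  refine eLpNorm_congr_ae ?_
  filter_upwards [Lp.coeFn_fun_finsetSum (s n) fun i => (hf i).toLp (f i),
    (eventually_all_finset (s n)).2 fun i _ => (hf i).coeFn_toLp] with a hsum hterms
  simp only [Function.comp_apply, Pi.sub_apply, hsum]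
  exact congrArg (· - S a) (sum_congr rfl hterms)

end MeasureTheory

namespace ProbabilityTheory

variable {Ω ι : Type*} {mΩ : MeasurableSpace Ω} {μ : Measure Ω}

theorem iIndepFun.integrable_finset_prod {X : ι → Ω → ℝ} (hX : iIndepFun X μ)
    (hmeas : ∀ i, Measurable (X i)) (hint : ∀ i, Integrable (X i) μ) (s : Finset ι) :
    Integrable (fun ω => ∏ i ∈ s, X i ω) μ := by
  have := hX.isProbabilityMeasure
  induction s using Finset.cons_induction with
  | empty => simp
  | cons j s hj ih =>
    have hindep := (hX.indepFun_finsetProd_of_notMem hmeas hj).symm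
    rw [prod_fn] at hindep
    simp only [prod_cons]
    exact hindep.integrable_mul (hint j) ih

theorem iIndepFun.integral_finset_prod {X : ι → Ω → ℝ} (hX : iIndepFun X μ)
    (hmeas : ∀ i, AEStronglyMeasurable (X i) μ) (s : Finset ι) :
    ∫ ω, ∏ i ∈ s, X i ω ∂μ = ∏ i ∈ s, ∫ ω, X i ω ∂μ := by
  simp_rw [← prod_coe_sort s]
  exact (hX.precomp Subtype.val_injective).integral_fun_prod_eq_prod_integral fun i => hmeas i

variable {ζ : ι → Ω → ℝ}

theorem iIndepFun.ite_sq [DecidableEq ι] (hζ : iIndepFun ζ μ) (s : Finset ι) :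
    iIndepFun (fun i ω => if i ∈ s then ζ i ω ^ 2 else ζ i ω) μ :=
  hζ.comp (fun i x => if i ∈ s then x ^ 2 else x) fun i => by split_ifs <;> fun_prop

theorem iIndepFun.integrable_prod_mul_prod [DecidableEq ι] (hζ : iIndepFun ζ μ)
    (hmeas : ∀ i, Measurable (ζ i)) (hL2 : ∀ i, MemLp (ζ i) 2 μ) (I J : Finset ι) :
    Integrable (fun ω => (∏ i ∈ I, ζ i ω) * ∏ i ∈ J, ζ i ω) μ := by
  have := hζ.isProbabilityMeasure
  simp_rw [prod_mul_prod_eq_prod_union_ite]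
  refine (hζ.ite_sq (I ∩ J)).integrable_finset_prod (fun i => ?_) (fun i => ?_) _
  · split_ifs
    exacts [(hmeas i).pow_const 2, hmeas i]
  · split_ifs
    exacts [(hL2 i).integrable_sq, (hL2 i).integrable one_le_two]

theorem iIndepFun.integral_prod_mul_prod [DecidableEq ι] (hζ : iIndepFun ζ μ)
    (hmeas : ∀ i, Measurable (ζ i)) {σ2 : ℝ} (hmean : ∀ i, ∫ ω, ζ i ω ∂μ = 0)
    (hvar : ∀ i, ∫ ω, ζ i ω ^ 2 ∂μ = σ2) (I J : Finset ι) :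
    ∫ ω, (∏ i ∈ I, ζ i ω) * ∏ i ∈ J, ζ i ω ∂μ = if I = J then σ2 ^ #I else 0 := by
  have hfactor : ∀ i, ∫ ω, (if i ∈ I ∩ J then ζ i ω ^ 2 else ζ i ω) ∂μ =
      if i ∈ I ∩ J then σ2 else 0 := fun i => by
    by_cases hi : i ∈ I ∩ J <;> simp [hi, hmean, hvar]
  simp_rw [prod_mul_prod_eq_prod_union_ite]
  rw [(hζ.ite_sq (I ∩ J)).integral_finset_prod fun i => ?_, prod_congr rfl fun i _ => hfactor i]
  · split_ifs with hIJ
    · subst hIJ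
      rw [union_self, inter_self, prod_congr rfl fun i hi => if_pos hi, prod_const]
    · obtain ⟨i, hiu, hin⟩ := not_subset.1 fun h => hIJ <|
        (subset_union_left.trans h).trans inter_subset_right |>.antisymm <|
          (subset_union_right.trans h).trans inter_subset_left
      exact prod_eq_zero hiu (if_neg hin)
  · split_ifs
    exacts [((hmeas i).pow_const 2).aestronglyMeasurable, (hmeas i).aestronglyMeasurable]

theorem iIndepFun.memLp_two_finset_prod (hζ : iIndepFun ζ μ) (hmeas : ∀ i, Measurable (ζ i))
    (hL2 : ∀ i, MemLp (ζ i) 2 μ) (I : Finset ι) : MemLp (fun ω => ∏ i ∈ I, ζ i ω) 2 μ := by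
  classical
  rw [memLp_two_iff_integrable_sq (I.measurable_prod fun i _ => hmeas i).aestronglyMeasurable]
  simpa only [sq] using hζ.integrable_prod_mul_prod hmeas hL2 I I

end ProbabilityTheory

theorem polynomial_chaos_L2_convergence_zero_mean_general
    {Ω : Type*} [MeasureSpace Ω]
    {ι : Type*}
    (ζ : ι → Ω → ℝ)
    (hmeas : ∀ i, Measurable (ζ i))
    (hindep : iIndepFun ζ ℙ)
    (hL2 : ∀ i, MemLp (ζ i) 2 ℙ)
    (σ2 : ℝ)
    (hmean : ∀ i, ∫ a, ζ i a ∂ℙ = 0)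
    (hvar : ∀ i, ∫ a, (ζ i a) ^ 2 ∂ℙ = σ2)
    (ψ : Finset ι → ℝ)
    (hsum : Summable (fun I : Finset ι => σ2 ^ I.card * ψ I ^ 2)) :
    ∃ S : Ω → ℝ, MemLp S 2 ℙ ∧
      ∀ Λ : ℕ → Finset ι, Monotone Λ → (∀ i : ι, ∃ N, i ∈ Λ N) →
        Tendsto
          (fun N => eLpNorm
            (fun a => (∑ I ∈ (Λ N).powerset, ψ I * ∏ i ∈ I, ζ i a) - S a) 2 ℙ)
          atTop (nhds 0) := by
  classical
  have hterm (I : Finset ι) : MemLp (fun a => ψ I * ∏ i ∈ I, ζ i a) 2 ℙ :=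
    (hindep.memLp_two_finset_prod hmeas hL2 I).const_mul (ψ I)
  set v := fun I => (hterm I).toLp _
  have hinner (I J : Finset ι) : ⟪v I, v J⟫_ℝ = if I = J then σ2 ^ #I * ψ I ^ 2 else 0 := by
    simp_rw [v, L2.real_inner_toLp, mul_mul_mul_comm (ψ I), integral_const_mul,
      hindep.integral_prod_mul_prod hmeas hmean hvar]
    split_ifs with hIJ
    · subst hIJ
      ring
    · simp
  have hv : Summable v := summable_of_pairwise_inner_eq_zero (𝕜 := ℝ)
    (fun I J hIJ => (hinner I J).trans (if_neg hIJ))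
    (hsum.congr fun I => by rw [← real_inner_self_eq_norm_sq, hinner, if_pos rfl])
  refine ⟨_, Lp.memLp (∑' I, v I), fun Λ hmono hexh => ?_⟩
  exact tendsto_eLpNorm_finset_sum_sub_of_hasSum hterm hv.hasSum
    (tendsto_finset_powerset_atTop_atTop.comp (tendsto_atTop_finset_of_monotone hmono hexh))

/-- **L² convergence of zero-mean polynomial chaos over a countable index set.**
Let `ι` be countably infinite, `ζ i` independent with zero mean and variance `σ2`,
and let `ψ` be a kernel on finite subsets of `ι` with
`∑_{I} σ2^{|I|} ψ(I)² < ∞`.  Then there is a single `S ∈ L²` such that for every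
increasing exhausting sequence of finite sets `Λ N`, the partial sums
`∑_{I ⊆ Λ N} ψ I * ∏_{i ∈ I} ζ i` converge to `S` in `L²`. -/
theorem polynomial_chaos_L2_convergence_zero_mean
    {Ω : Type*} [MeasureSpace Ω] [IsProbabilityMeasure (ℙ : Measure Ω)]
    {ι : Type*} [Countable ι] [Infinite ι] [DecidableEq ι]
    (ζ : ι → Ω → ℝ)
    (hmeas : ∀ i, Measurable (ζ i))
    (hindep : iIndepFun ζ ℙ)
    (hL2 : ∀ i, MemLp (ζ i) 2 ℙ)
    (σ2 : ℝ)
    (hmean : ∀ i, ∫ a, ζ i a ∂ℙ = 0)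
    (hvar : ∀ i, ∫ a, (ζ i a) ^ 2 ∂ℙ = σ2)
    (ψ : Finset ι → ℝ)
    (hsum : Summable (fun I : Finset ι => σ2 ^ I.card * ψ I ^ 2)) :
    ∃ S : Ω → ℝ, MemLp S 2 ℙ ∧
      ∀ Λ : ℕ → Finset ι, Monotone Λ → (∀ i : ι, ∃ N, i ∈ Λ N) →
        Tendsto
          (fun N => eLpNorm
            (fun a => (∑ I ∈ (Λ N).powerset, ψ I * ∏ i ∈ I, ζ i a) - S a) 2 ℙ)
          atTop (nhds 0) :=
  polynomial_chaos_L2_convergence_zero_mean_general ζ hmeas hindep hL2 σ2 hmean hvar ψ hsum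
end

section
/- Exponential tilting of a square-integrable random variable: Let X be a real random variable with 0 < E[X²] < ∞, and let A > 0 satisfy E[X²·1_{|X|>A}] ≤ (1/4)·E[X²]. Set ε := E[X²]²/(144·A³) and assume |E[X]| ≤ ε. Then there exists a measurable function f : ℝ → (0,∞) such that, writing μ for the law of X: (i) ∫ f dμ = 1, so f·dμ is a probability law; (ii) ∫ x·f(x) μ(dx) = 0; (iii) ∫ x²·f(x) μ(dx) ≤ E[X²] + (A^{3/2}/√ε)·|E[X]|; and (iv) for every p ∈ ℝ, ∫ f(x)^p μ(dx) ≤ 1 + (4·e^{|p|}/(A·ε))·(E[X])². -/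
open MeasureTheory ProbabilityTheory

/-!
The density is a linear rather than an exponential tilt. With the truncation
`T x = x · 1_{|x| ≤ A}` and `s₁ = E[T²] ≥ (3/4) E[X²]`, take
`f = (1 + t T) / (1 + t E[T])` with `t = -E[X] / s₁`; then `∫ x f = 0` because
`x T(x) = T(x)²`. The smallness of `E[X]` gives `|t| A ≤ 1/81`, so `f` stays within
`3 A |E[X]| / E[X²]` of `1` everywhere. This gives the second-moment bound at once. The bound
on `∫ f^p` follows from `∫ (f - 1) = 0` and the pointwise estimate
`(1 + y)^p ≤ 1 + p y + 16 e^{|p|} y²` for `|y| ≤ 1/20`.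
-/

namespace Real

theorem exp_le_one_add_add_sq_mul_exp_abs (z : ℝ) : exp z ≤ 1 + z + z ^ 2 * exp |z| := by
  have key : exp z * (1 - z) ≤ 1 :=
    calc exp z * (1 - z) ≤ exp z * exp (-z) := by gcongr; linarith [add_one_le_exp (-z)]
      _ = 1 := by rw [← exp_add, add_neg_cancel, exp_zero]
  rcases le_total 0 z with hz | hz
  · rw [abs_of_nonneg hz]
    nlinarith [mul_nonneg hz (sub_nonneg.2 key)]
  · have h1 : exp z ≤ 1 + z + z ^ 2 := by
      nlinarith [mul_nonneg (neg_nonneg.2 hz) (sq_nonneg z)]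
    have h2 : z ^ 2 ≤ z ^ 2 * exp |z| :=
      le_mul_of_one_le_right (sq_nonneg z) (one_le_exp (abs_nonneg z))
    linarith

theorem abs_log_one_add_sub_self_le {y : ℝ} (hy : |y| ≤ 1 / 2) :
    |log (1 + y) - y| ≤ 2 * y ^ 2 := by
  have h := abs_log_sub_add_sum_range_le (x := -y) (by rw [abs_neg]; linarith) 1
  simp only [Finset.sum_range_one, zero_add, pow_one, Nat.cast_zero, div_one, sub_neg_eq_add,
    abs_neg] at h
  calc |log (1 + y) - y| = |-y + log (1 + y)| := by ring_nf
    _ ≤ |y| ^ 2 / (1 - |y|) := h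
    _ ≤ 2 * y ^ 2 := by
      rw [sq_abs, div_le_iff₀ (by linarith)]
      nlinarith [sq_nonneg y]

theorem sq_mul_exp_div_ten_le (q : ℝ) (hq : 0 ≤ q) : q ^ 2 * exp (q / 10) ≤ 3 * exp q := by
  have h := pow_div_factorial_le_exp (9 * q / 10) (by positivity) 2
  have hsplit : exp q = exp (9 * q / 10) * exp (q / 10) := by rw [← exp_add]; ring_nf
  rw [hsplit, ← mul_assoc]
  gcongr
  norm_num [Nat.factorial] at h
  nlinarith [exp_pos (9 * q / 10)]

theorem one_add_rpow_le {y : ℝ} (hy : |y| ≤ 1 / 20) (p : ℝ) :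
    (1 + y) ^ p ≤ 1 + p * y + 16 * exp |p| * y ^ 2 := by
  have hy' := abs_le.1 hy
  set L := log (1 + y)
  have hLy : |L - y| ≤ 2 * y ^ 2 := abs_log_one_add_sub_self_le (by linarith)
  have hL2 : |L| ≤ 2 * |y| := by
    have := abs_sub_abs_le_abs_sub L y
    nlinarith [sq_abs y, abs_nonneg y]
  have hpL : |p * L| ≤ |p| / 10 := by
    rw [abs_mul]; nlinarith [abs_nonneg p, abs_nonneg L]
  have hlin : p * L ≤ p * y + 2 * |p| * y ^ 2 := by
    have := le_abs_self (p * (L - y))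
    rw [abs_mul] at this
    nlinarith [abs_nonneg p]
  have hLsq : L ^ 2 ≤ 4 * y ^ 2 := by
    have := sq_le_sq' (abs_le.1 hL2).1 (abs_le.1 hL2).2
    rwa [mul_pow, sq_abs, show (2 : ℝ) ^ 2 = 4 by norm_num] at this
  have hquad : (p * L) ^ 2 * exp |p * L| ≤ 4 * y ^ 2 * (p ^ 2 * exp (|p| / 10)) :=
    calc (p * L) ^ 2 * exp |p * L| ≤ p ^ 2 * (4 * y ^ 2) * exp (|p| / 10) := by
          rw [mul_pow]; gcongr
      _ = _ := by ring
  have hcoef : 2 * |p| + 4 * (p ^ 2 * exp (|p| / 10)) ≤ 16 * exp |p| := by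
    have h1 := sq_mul_exp_div_ten_le |p| (abs_nonneg p)
    rw [sq_abs] at h1
    linarith [add_one_le_exp |p|, exp_pos |p|]
  calc (1 + y) ^ p = exp (p * L) := by rw [rpow_def_of_pos (by linarith), mul_comm]
    _ ≤ 1 + p * L + (p * L) ^ 2 * exp |p * L| := exp_le_one_add_add_sq_mul_exp_abs _
    _ ≤ 1 + p * y + (2 * |p| + 4 * (p ^ 2 * exp (|p| / 10))) * y ^ 2 := by nlinarith
    _ ≤ 1 + p * y + 16 * exp |p| * y ^ 2 := by gcongr

end Real

open Real

theorem integral_rpow_le_of_abs_sub_one_le {α : Type*} [MeasurableSpace α]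
    {μ : Measure α} [IsProbabilityMeasure μ] {f : α → ℝ} {δ : ℝ} (hf : ∫ x, f x ∂μ = 1)
    (hδ : δ ≤ 1 / 20) (hfδ : ∀ x, |f x - 1| ≤ δ) (p : ℝ) :
    ∫ x, f x ^ p ∂μ ≤ 1 + 16 * exp |p| * δ ^ 2 := by
  have hfi : Integrable f μ := .of_integral_ne_zero (by simp [hf])
  have hbound (x : α) : f x ^ p ≤ p * f x + (1 - p + 16 * exp |p| * δ ^ 2) := by
    have hx := one_add_rpow_le ((hfδ x).trans hδ) p
    rw [add_sub_cancel] at hx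
    have : (f x - 1) ^ 2 ≤ δ ^ 2 := by
      rw [← sq_abs]; exact pow_le_pow_left₀ (abs_nonneg _) (hfδ x) 2
    nlinarith [exp_pos |p|]
  have hnonneg (x : α) : 0 ≤ f x ^ p := by
    have := (abs_le.1 ((hfδ x).trans hδ)).1
    exact rpow_nonneg (by linarith) p
  calc ∫ x, f x ^ p ∂μ ≤ ∫ x, (p * f x + (1 - p + 16 * exp |p| * δ ^ 2)) ∂μ :=
        integral_mono_of_nonneg (ae_of_all _ hnonneg)
          ((hfi.const_mul p).add (integrable_const _)) (ae_of_all _ hbound)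
    _ = 1 + 16 * exp |p| * δ ^ 2 := by
      rw [integral_add (hfi.const_mul p) (integrable_const _), integral_const_mul, hf]
      simp only [integral_const, probReal_univ, one_smul]
      ring

theorem integral_mul_le_of_abs_sub_one_le {α : Type*} [MeasurableSpace α] {μ : Measure α}
    {f h : α → ℝ} {δ : ℝ} (hh : Integrable h μ) (hh0 : ∀ x, 0 ≤ h x) (hδ : δ ≤ 1)
    (hfδ : ∀ x, |f x - 1| ≤ δ) :
    ∫ x, h x * f x ∂μ ≤ (1 + δ) * ∫ x, h x ∂μ := by
  have hf (x : α) : 0 ≤ f x ∧ f x ≤ 1 + δ := by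
    constructor <;> linarith [(abs_le.1 ((hfδ x).trans hδ)).1, (abs_le.1 (hfδ x)).2]
  rw [← integral_const_mul]
  exact integral_mono_of_nonneg (ae_of_all _ fun x => mul_nonneg (hh0 x) (hf x).1)
    (hh.const_mul _) (ae_of_all _ fun x => by
      simpa only [mul_comm (1 + δ)] using mul_le_mul_of_nonneg_left (hf x).2 (hh0 x))

section LinearTilt

variable {α : Type*} [MeasurableSpace α] {μ : Measure α} {g h : α → ℝ} {A t : ℝ}

noncomputable def linearTilt (μ : Measure α) (g : α → ℝ) (t : ℝ) (x : α) : ℝ :=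
  (1 + t * g x) / (1 + t * ∫ y, g y ∂μ)

theorem measurable_linearTilt (hg : Measurable g) : Measurable (linearTilt μ g t) :=
  ((hg.const_mul t).const_add 1).div_const _

theorem integral_mul_linearTilt (hh : Integrable h μ) (hhg : Integrable (fun x => h x * g x) μ) :
    ∫ x, h x * linearTilt μ g t x ∂μ =
      (∫ x, h x ∂μ + t * ∫ x, h x * g x ∂μ) / (1 + t * ∫ x, g x ∂μ) := by
  have (x : α) :
      h x * linearTilt μ g t x = (h x + t * (h x * g x)) / (1 + t * ∫ y, g y ∂μ) := by
    rw [linearTilt]; ring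
  simp_rw [this]
  rw [integral_div, integral_add hh (hhg.const_mul t), integral_const_mul]

theorem one_sub_le_one_add_mul {a : ℝ} (ha : |a| ≤ A) : 1 - |t| * A ≤ 1 + t * a := by
  have : |t * a| ≤ |t| * A := by rw [abs_mul]; gcongr
  linarith [neg_abs_le (t * a)]

variable [IsProbabilityMeasure μ]

theorem abs_integral_le_of_abs_le (hgA : ∀ x, |g x| ≤ A) : |∫ x, g x ∂μ| ≤ A := by
  simpa using norm_integral_le_of_norm_le_const (μ := μ)
    (ae_of_all _ fun x => (norm_eq_abs (g x)).trans_le (hgA x))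

theorem integral_sq_le_of_abs_le (hgA : ∀ x, |g x| ≤ A) : ∫ x, g x ^ 2 ∂μ ≤ A ^ 2 := by
  have hsq (x : α) : |g x ^ 2| ≤ A ^ 2 := by
    rw [abs_pow]; exact pow_le_pow_left₀ (abs_nonneg _) (hgA x) 2
  exact (le_abs_self _).trans (abs_integral_le_of_abs_le hsq)

theorem one_add_mul_integral_pos (hgA : ∀ x, |g x| ≤ A) (ht : |t| * A < 1) :
    0 < 1 + t * ∫ x, g x ∂μ := by
  linarith [one_sub_le_one_add_mul (t := t) (abs_integral_le_of_abs_le (μ := μ) hgA)]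

theorem linearTilt_pos (hgA : ∀ x, |g x| ≤ A) (ht : |t| * A < 1) (x : α) :
    0 < linearTilt μ g t x :=
  div_pos (by linarith [one_sub_le_one_add_mul (t := t) (hgA x)])
    (one_add_mul_integral_pos hgA ht)

theorem abs_linearTilt_sub_one_le (hgA : ∀ x, |g x| ≤ A) (ht : |t| * A < 1) (x : α) :
    |linearTilt μ g t x - 1| ≤ 2 * (|t| * A) / (1 - |t| * A) := by
  set E := ∫ y, g y ∂μ
  have hZ : 0 < 1 + t * E := one_add_mul_integral_pos hgA ht
  have hdiff : |g x - E| ≤ 2 * A := by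
    linarith [abs_sub (g x) E, hgA x, abs_integral_le_of_abs_le (μ := μ) hgA]
  calc |linearTilt μ g t x - 1| = |t| * |g x - E| / (1 + t * E) := by
        rw [linearTilt, div_sub_one hZ.ne', abs_div, abs_of_pos hZ, ← abs_mul]
        ring_nf
    _ ≤ |t| * (2 * A) / (1 - |t| * A) := by
        have hA : 0 ≤ A := (abs_nonneg _).trans (hgA x)
        gcongr
        exact one_sub_le_one_add_mul (abs_integral_le_of_abs_le hgA)
    _ = 2 * (|t| * A) / (1 - |t| * A) := by ring

theorem integral_linearTilt (hg : Integrable g μ) (hgA : ∀ x, |g x| ≤ A) (ht : |t| * A < 1) :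
    ∫ x, linearTilt μ g t x ∂μ = 1 := by
  have h := integral_mul_linearTilt (μ := μ) (t := t) (h := fun _ => 1) (integrable_const 1)
    (by simpa using hg)
  simp only [one_mul, integral_const, probReal_univ, one_smul] at h
  rw [h, div_self (one_add_mul_integral_pos hgA ht).ne']

end LinearTilt

section Truncation

variable {μ : Measure ℝ} {A : ℝ}

theorem abs_indicator_Icc_le (hA : 0 ≤ A) (x : ℝ) :
    |(Set.Icc (-A) A).indicator id x| ≤ A := by
  by_cases hx : x ∈ Set.Icc (-A) A
  · rwa [Set.indicator_of_mem hx, id, abs_le]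
  · simpa [hx] using hA

theorem mul_indicator_id_self (s : Set ℝ) (x : ℝ) :
    x * s.indicator id x = s.indicator id x ^ 2 := by
  by_cases hx : x ∈ s <;> simp [hx, sq]

theorem integral_sq_indicator_Icc (hL2 : Integrable (fun x => x ^ 2) μ) :
    ∫ x, (Set.Icc (-A) A).indicator id x ^ 2 ∂μ =
      ∫ x, x ^ 2 ∂μ - ∫ x in {x : ℝ | A < |x|}, x ^ 2 ∂μ := by
  have hcompl : {x : ℝ | A < |x|} = (Set.Icc (-A) A)ᶜ := by
    ext x; simp only [Set.mem_ofPred_eq, Set.mem_compl_iff, Set.mem_Icc, ← abs_le, not_le]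
  have hsq (x : ℝ) :
      (Set.Icc (-A) A).indicator id x ^ 2 = (Set.Icc (-A) A).indicator (· ^ 2) x := by
    by_cases hx : x ∈ Set.Icc (-A) A <;> simp [hx]
  simp_rw [hsq]
  rw [integral_indicator measurableSet_Icc, hcompl, setIntegral_compl measurableSet_Icc hL2]
  ring

end Truncation

theorem rpow_three_halves_div_sqrt {A s : ℝ} (hA : 0 < A) (hs : 0 < s) :
    A ^ ((3 : ℝ) / 2) / √(s ^ 2 / (144 * A ^ 3)) = 12 * A ^ 3 / s := by
  have hA3 : (A ^ ((3 : ℝ) / 2)) ^ 2 = A ^ 3 := by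
    rw [← rpow_natCast, ← rpow_mul hA.le]; norm_num
  have hsqrt : √(s ^ 2 / (144 * A ^ 3)) = s / (12 * A ^ ((3 : ℝ) / 2)) := by
    rw [← hA3, show (144 : ℝ) = 12 ^ 2 by norm_num, ← mul_pow, ← div_pow,
      sqrt_sq (by positivity)]
  rw [hsqrt, div_div_eq_mul_div, mul_comm, mul_assoc, ← sq, hA3]

theorem exists_centering_density (μ : Measure ℝ) [IsProbabilityMeasure μ]
    (hL2 : Integrable (fun x => x ^ 2) μ) (hpos : 0 < ∫ x, x ^ 2 ∂μ) {A : ℝ} (hA : 0 ≤ A)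
    (htrunc : ∫ x in {x : ℝ | A < |x|}, x ^ 2 ∂μ ≤ 1 / 4 * ∫ x, x ^ 2 ∂μ)
    (hmean : A * |∫ x, x ∂μ| / ∫ x, x ^ 2 ∂μ ≤ 1 / 108) :
    ∃ f : ℝ → ℝ, Measurable f ∧ (∀ x, 0 < f x) ∧ ∫ x, f x ∂μ = 1 ∧
      ∫ x, x * f x ∂μ = 0 ∧ ∀ x, |f x - 1| ≤ 3 * (A * |∫ x, x ∂μ| / ∫ x, x ^ 2 ∂μ) := by
  have hX : Integrable (fun x => x) μ :=
    ((memLp_two_iff_integrable_sq aestronglyMeasurable_id).2 hL2).integrable one_le_two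
  have hs₁ := integral_sq_indicator_Icc (μ := μ) (A := A) hL2
  set s := ∫ x, x ^ 2 ∂μ
  set m := ∫ x, x ∂μ
  set T := (Set.Icc (-A) A).indicator id
  have hTA : ∀ x, |T x| ≤ A := abs_indicator_Icc_le hA
  have hTmeas : Measurable T := measurable_id.indicator measurableSet_Icc
  have hTint : Integrable T μ := .of_bound hTmeas.aestronglyMeasurable A (ae_of_all _ hTA)
  set s₁ := ∫ x, T x ^ 2 ∂μ
  replace hs₁ : 3 / 4 * s ≤ s₁ := by linarith
  set t := -m / s₁
  have hu : |t| * A ≤ 4 / 3 * (A * |m| / s) :=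
    calc |t| * A = A * |m| / s₁ := by
          rw [abs_div, abs_neg, abs_of_pos (by linarith : 0 < s₁)]; ring
      _ ≤ A * |m| / (3 / 4 * s) := by gcongr
      _ = 4 / 3 * (A * |m| / s) := by ring
  have hδ : 2 * (|t| * A) / (1 - |t| * A) ≤ 3 * (A * |m| / s) := by
    rw [div_le_iff₀ (by linarith)]
    nlinarith [abs_nonneg t, mul_nonneg (abs_nonneg t) hA]
  have ht : |t| * A < 1 := by linarith
  refine ⟨linearTilt μ T t, measurable_linearTilt hTmeas, linearTilt_pos hTA ht,
    integral_linearTilt hTint hTA ht, ?_, fun x => (abs_linearTilt_sub_one_le hTA ht x).trans hδ⟩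
  rw [integral_mul_linearTilt hX (hX.mul_bdd hTmeas.aestronglyMeasurable (ae_of_all _ hTA)),
    funext (mul_indicator_id_self _), div_mul_cancel₀ _ (by linarith : s₁ ≠ 0),
    add_neg_cancel, zero_div]

/-- **Exponential tilting of a square-integrable random variable.**
Let `μ` be the law of a real random variable `X` with `0 < E[X²] < ∞`, and let
`A > 0` satisfy `E[X² 1_{|X|>A}] ≤ (1/4) E[X²]`.  Set `ε = E[X²]²/(144 A³)` and
assume `|E[X]| ≤ ε`.  Then there is a measurable density `f > 0` with
`∫ f dμ = 1`, `∫ x f(x) dμ = 0`,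
`∫ x² f(x) dμ ≤ E[X²] + (A^{3/2}/√ε) |E[X]|`, and for every `p ∈ ℝ`,
`∫ f(x)^p dμ ≤ 1 + (4 e^{|p|}/(A ε)) E[X]²`. -/
theorem exponential_tilting
    (μ : Measure ℝ) [IsProbabilityMeasure μ]
    (hL2 : Integrable (fun x => x ^ 2) μ)
    (hpos : 0 < ∫ x, x ^ 2 ∂μ)
    (A : ℝ) (hA : 0 < A)
    (htrunc : ∫ x in {x : ℝ | A < |x|}, x ^ 2 ∂μ ≤ (1 / 4) * ∫ x, x ^ 2 ∂μ)
    (ε : ℝ) (hε : ε = (∫ x, x ^ 2 ∂μ) ^ 2 / (144 * A ^ 3))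
    (hmean : |∫ x, x ∂μ| ≤ ε) :
    ∃ f : ℝ → ℝ, Measurable f ∧ (∀ x, 0 < f x) ∧
      (∫ x, f x ∂μ = 1) ∧
      (∫ x, x * f x ∂μ = 0) ∧
      (∫ x, x ^ 2 * f x ∂μ
        ≤ (∫ x, x ^ 2 ∂μ) + (A ^ ((3 : ℝ) / 2) / Real.sqrt ε) * |∫ x, x ∂μ|) ∧
      (∀ p : ℝ, ∫ x, f x ^ p ∂μ ≤ 1 + (4 * Real.exp |p| / (A * ε)) * (∫ x, x ∂μ) ^ 2) := by
  have hsA : ∫ x, x ^ 2 ∂μ ≤ 4 / 3 * A ^ 2 := by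
    linarith [integral_sq_indicator_Icc (μ := μ) (A := A) hL2,
      integral_sq_le_of_abs_le (μ := μ) (abs_indicator_Icc_le hA.le)]
  set s := ∫ x, x ^ 2 ∂μ
  set m := ∫ x, x ∂μ
  subst hε
  set r := A * |m| / s
  have hr : r ≤ 1 / 108 :=
    calc A * |m| / s ≤ A * (s ^ 2 / (144 * A ^ 3)) / s := by gcongr
      _ = s / (144 * A ^ 2) := by field_simp
      _ ≤ 1 / 108 := by rw [div_le_iff₀ (by positivity)]; linarith
  obtain ⟨f, hfm, hfpos, hf1, hfx, hfδ⟩ := exists_centering_density μ hL2 hpos hA.le htrunc hr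
  refine ⟨f, hfm, hfpos, hf1, hfx, ?_, fun p => ?_⟩
  · have hcoef : 3 * A ≤ 12 * A ^ 3 / s := by rw [le_div_iff₀ hpos]; nlinarith
    calc ∫ x, x ^ 2 * f x ∂μ ≤ (1 + 3 * r) * s :=
          integral_mul_le_of_abs_sub_one_le hL2 (fun x => sq_nonneg x) (by linarith) hfδ
      _ = s + 3 * A * |m| := by simp only [r]; field_simp
      _ ≤ s + A ^ ((3 : ℝ) / 2) / √(s ^ 2 / (144 * A ^ 3)) * |m| := by
          rw [rpow_three_halves_div_sqrt hA hpos]; gcongr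
  · calc ∫ x, f x ^ p ∂μ ≤ 1 + 16 * exp |p| * (3 * r) ^ 2 :=
          integral_rpow_le_of_abs_sub_one_le hf1 (by linarith) hfδ p
      _ ≤ 1 + 576 * exp |p| * r ^ 2 := by nlinarith [exp_pos |p|, sq_nonneg r]
      _ = 1 + 4 * exp |p| / (A * (s ^ 2 / (144 * A ^ 3))) * m ^ 2 := by
          simp only [r]; rw [div_pow, mul_pow, sq_abs]; field_simp; ring
end

section
/- Truncation decomposition of a centered square-integrable random variable: Let Y be a real random variable with E[Y] = 0 and E[Y²] < ∞, and let M ∈ (0,∞). Then there exist a probability space carrying random variables Y′, Y⁻, Y⁺ such that: Y′ has the same law as Y; Y′ = Y⁻ + Y⁺; E[Y⁻] = E[Y⁺] = 0; Y⁻·Y⁺ = 0 almost surely; |Y⁻| ≤ |Y′|·1_{|Y′| ≤ M} almost surely; and E[(Y⁺)²] ≤ 2·E[Y²·1_{|Y| > M}]. -/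
/-!
Put `Y⁺ = Y` on the tail `T = {|Y| > M}`. Its mean `d = E[Y; T]` must be compensated: since
`E[Y] = 0`, the bulk values `|Y| ≤ M` whose sign is opposite to `d` have a mean of absolute
value at least `|d|`, so an independent coin of suitable bias `s ∈ [0, 1]` can move a fraction of
them into `Y⁺` and make it centered. Those values are bounded by `M`, so they add at most
`M |d| ≤ M E[|Y|; T] ≤ E[Y²; T]` to `E[(Y⁺)²]`. The coin lives on the product of the law of `Y`
with the unit interval.
-/

open MeasureTheory ProbabilityTheory Set unitInterval

lemma exists_mem_Icc_mul_eq {a b : ℝ} (h : 0 ≤ a * (b - a)) : ∃ s ∈ Icc (0 : ℝ) 1, s * b = a := by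
  rcases eq_or_ne b 0 with rfl | hb
  · exact ⟨0, left_mem_Icc.2 zero_le_one, by nlinarith⟩
  · have h01 : 0 ≤ a / b * (1 - a / b) := by
      rw [show a / b * (1 - a / b) = a * (b - a) / b ^ 2 by field_simp]
      positivity
    refine ⟨a / b, ⟨?_, ?_⟩, div_mul_cancel₀ a hb⟩ <;> nlinarith

lemma integral_indicator_add_mul_indicator_mul {α : Type*} [MeasurableSpace α] {μ : Measure α}
    {T C : Set α} (hT : MeasurableSet T) (hC : MeasurableSet C) (s : ℝ) {g : α → ℝ}
    (hg : Integrable g μ) :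
    ∫ x, (T.indicator 1 x + s * C.indicator 1 x) * g x ∂μ
      = ∫ x in T, g x ∂μ + s * ∫ x in C, g x ∂μ := by
  have hpoint : ∀ x, (T.indicator 1 x + s * C.indicator 1 x) * g x
      = T.indicator g x + s * C.indicator g x := fun x => by
    simp only [add_mul, mul_assoc, ← indicator_mul_left, Pi.one_apply, one_mul]
  simp_rw [hpoint]
  rw [integral_add (hg.indicator hT) ((hg.indicator hC).const_mul s), integral_const_mul,
    integral_indicator hT, integral_indicator hC]

lemma setIntegral_prod_unitInterval_le {α : Type*} [MeasurableSpace α] (μ : Measure α)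
    [SFinite μ] {q : α → ℝ} (hq : Measurable q) (hq01 : ∀ x, q x ∈ Icc 0 1)
    {g : α → ℝ} (hg : Integrable g μ) :
    ∫ z in {z : α × I | (z.2 : ℝ) ≤ q z.1}, g z.1 ∂μ.prod volume = ∫ x, q x * g x ∂μ := by
  have hS : MeasurableSet {z : α × I | (z.2 : ℝ) ≤ q z.1} :=
    measurableSet_le (measurable_subtype_coe.comp measurable_snd) (hq.comp measurable_fst)
  rw [← integral_indicator hS, integral_prod _ ((hg.comp_fst _).indicator hS)]
  refine integral_congr_ae (Filter.Eventually.of_forall fun x => ?_)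
  dsimp only
  rw [show (fun u : I => {z : α × I | (z.2 : ℝ) ≤ q z.1}.indicator (fun z => g z.1) (x, u))
      = (Iic (⟨q x, hq01 x⟩ : I)).indicator (fun _ => g x) from rfl,
    integral_indicator_const _ measurableSet_Iic, measureReal_def, volume_Iic,
    ENNReal.toReal_ofReal (hq01 x).1, smul_eq_mul]

section Tail

variable {μ : Measure ℝ} {M d : ℝ}

lemma mul_abs_setIntegral_le_setIntegral_sq (hM : 0 ≤ M) (hX : Integrable (fun x => x) μ)
    (hX2 : Integrable (fun x => x ^ 2) μ) :
    M * |∫ x in {x | M < |x|}, x ∂μ| ≤ ∫ x in {x | M < |x|}, x ^ 2 ∂μ := by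
  have hT : MeasurableSet {x : ℝ | M < |x|} := measurableSet_lt measurable_const measurable_abs
  calc M * |∫ x in {x | M < |x|}, x ∂μ| ≤ M * ∫ x in {x | M < |x|}, |x| ∂μ :=
        mul_le_mul_of_nonneg_left abs_integral_le_integral_abs hM
    _ = ∫ x in {x | M < |x|}, M * |x| ∂μ := (integral_const_mul M _).symm
    _ ≤ ∫ x in {x | M < |x|}, x ^ 2 ∂μ := by
        refine setIntegral_mono_on (hX.abs.const_mul M).integrableOn hX2.integrableOn hT
          fun x hx => ?_
        rw [← sq_abs, sq]
        exact mul_le_mul_of_nonneg_right hx.le (abs_nonneg x)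

lemma mul_setIntegral_inter_mul_neg_le (hX : Integrable (fun x => x) μ) (hmean : ∫ x, x ∂μ = 0)
    (hd : ∫ x in {x | M < |x|}, x ∂μ = d) :
    d * ∫ x in {x | M < |x|}ᶜ ∩ {x | x * d < 0}, x ∂μ ≤ -d ^ 2 := by
  have hT : MeasurableSet {x : ℝ | M < |x|} := measurableSet_lt measurable_const measurable_abs
  have hN : MeasurableSet {x : ℝ | x * d < 0} :=
    measurableSet_lt (measurable_id.mul_const d) measurable_const
  have hbulk : ∫ x in {x | M < |x|}ᶜ, x ∂μ = -d := by
    linarith [integral_add_compl hT hX]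
  have hsame : 0 ≤ d * ∫ x in {x | M < |x|}ᶜ \ {x | x * d < 0}, x ∂μ := by
    rw [← integral_const_mul]
    exact setIntegral_nonneg (hT.compl.diff hN) fun x hx => by simpa [mul_comm] using hx.2
  have hsplit := integral_inter_add_sdiff hN (hX.integrableOn (s := {x | M < |x|}ᶜ))
  rw [hbulk] at hsplit
  linear_combination d * hsplit + hsame

lemma abs_eq_neg_sign_mul_of_mul_neg {x d : ℝ} (h : x * d < 0) :
    |x| = -(SignType.sign d : ℝ) * x := by
  rcases lt_trichotomy d 0 with hd | rfl | hd
  · rw [sign_neg hd, abs_of_pos (pos_of_mul_neg_left h hd.le)]; simp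
  · simp at h
  · rw [sign_pos hd, abs_of_neg (neg_of_mul_neg_left h hd.le)]; simp

lemma mul_setIntegral_sq_inter_mul_neg_le (hX : Integrable (fun x => x) μ)
    (hX2 : Integrable (fun x => x ^ 2) μ) {s : ℝ} (hs : 0 ≤ s)
    (hsd : s * ∫ x in {x | M < |x|}ᶜ ∩ {x | x * d < 0}, x ∂μ = -d) :
    s * ∫ x in {x | M < |x|}ᶜ ∩ {x | x * d < 0}, x ^ 2 ∂μ ≤ M * |d| := by
  set C := {x : ℝ | M < |x|}ᶜ ∩ {x | x * d < 0}
  have hC : MeasurableSet C :=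
    (measurableSet_lt measurable_const measurable_abs).compl.inter
      (measurableSet_lt (measurable_id.mul_const d) measurable_const)
  have hbound : ∫ x in C, x ^ 2 ∂μ ≤ -(M * SignType.sign d) * ∫ x in C, x ∂μ := by
    rw [← integral_const_mul]
    refine setIntegral_mono_on hX2.integrableOn (hX.const_mul _).integrableOn hC
      fun x ⟨hxM, hxd⟩ => ?_
    calc x ^ 2 = |x| * |x| := by rw [← sq, sq_abs]
      _ ≤ M * |x| := mul_le_mul_of_nonneg_right (not_lt.1 hxM) (abs_nonneg x)
      _ = -(M * SignType.sign d) * x := by rw [abs_eq_neg_sign_mul_of_mul_neg hxd]; ring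
  calc s * ∫ x in C, x ^ 2 ∂μ ≤ s * (-(M * SignType.sign d) * ∫ x in C, x ∂μ) :=
        mul_le_mul_of_nonneg_left hbound hs
    _ = M * (SignType.sign d * d) := by rw [mul_left_comm, hsd]; ring
    _ = M * |d| := by rw [sign_mul_self]

/-- `q x` is the probability with which the value `x` is assigned to `Y⁺`. -/
lemma exists_selection_prob (hM : 0 ≤ M) (hX : Integrable (fun x => x) μ)
    (hX2 : Integrable (fun x => x ^ 2) μ) (hmean : ∫ x, x ∂μ = 0) :
    ∃ q : ℝ → ℝ, Measurable q ∧ (∀ x, q x ∈ Icc 0 1) ∧ (∀ x, M < |x| → q x = 1) ∧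
      ∫ x, q x * x ∂μ = 0 ∧ ∫ x, q x * x ^ 2 ∂μ ≤ 2 * ∫ x in {x | M < |x|}, x ^ 2 ∂μ := by
  set T := {x : ℝ | M < |x|}
  set d := ∫ x in T, x ∂μ with hd
  set C := Tᶜ ∩ {x | x * d < 0}
  have hT : MeasurableSet T := measurableSet_lt measurable_const measurable_abs
  have hC : MeasurableSet C :=
    hT.compl.inter (measurableSet_lt (measurable_id.mul_const d) measurable_const)
  obtain ⟨s, ⟨hs0, hs1⟩, hsd⟩ : ∃ s ∈ Icc (0 : ℝ) 1, s * ∫ x in C, x ∂μ = -d :=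
    exists_mem_Icc_mul_eq (by linarith [mul_setIntegral_inter_mul_neg_le hX hmean hd.symm])
  refine ⟨fun x => T.indicator 1 x + s * C.indicator 1 x,
    (measurable_one.indicator hT).add (measurable_const.mul (measurable_one.indicator hC)),
    fun x => ?_, fun x hx => ?_, ?_, ?_⟩
  · by_cases hxT : x ∈ T
    · have hxC : x ∉ C := fun h => h.1 hxT
      simp [hxT, hxC]
    · by_cases hxC : x ∈ C <;> simp [hxT, hxC, hs0, hs1]
  · have hxC : x ∉ C := fun h => h.1 hx
    simp [show x ∈ T from hx, hxC]
  · rw [integral_indicator_add_mul_indicator_mul hT hC s hX, hsd, ← hd, add_neg_cancel]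
  · rw [integral_indicator_add_mul_indicator_mul hT hC s hX2]
    linarith [mul_setIntegral_sq_inter_mul_neg_le hX hX2 hs0 hsd,
      mul_abs_setIntegral_le_setIntegral_sq (μ := μ) hM hX hX2]

end Tail

lemma exists_decomposition_prod_unitInterval (π : Measure ℝ) [IsProbabilityMeasure π] {M : ℝ}
    (hM : 0 ≤ M) (hX : Integrable (fun x => x) π) (hX2 : Integrable (fun x => x ^ 2) π)
    (hmean : ∫ x, x ∂π = 0) :
    ∃ Ym Yp : ℝ × I → ℝ, Measurable Ym ∧ Measurable Yp ∧ (∀ z, z.1 = Ym z + Yp z) ∧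
      (∫ z, Ym z ∂π.prod volume = 0) ∧ (∫ z, Yp z ∂π.prod volume = 0) ∧
      (∀ z, Ym z * Yp z = 0) ∧ (∀ z, |Ym z| ≤ {x : ℝ | |x| ≤ M}.indicator (fun x => |x|) z.1) ∧
      ∫ z, Yp z ^ 2 ∂π.prod volume ≤ 2 * ∫ x in {x | M < |x|}, x ^ 2 ∂π := by
  obtain ⟨q, hq, hq01, hq_tail, hq_mean, hq_sq⟩ := exists_selection_prob hM hX hX2 hmean
  set S := {z : ℝ × I | (z.2 : ℝ) ≤ q z.1}
  have hS : MeasurableSet S :=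
    measurableSet_le (measurable_subtype_coe.comp measurable_snd) (hq.comp measurable_fst)
  have hfst_mean : ∫ z, z.1 ∂π.prod (volume : Measure I) = 0 := by
    rw [integral_fun_fst (fun x : ℝ => x), hmean, smul_zero]
  have hYp_mean : ∫ z in S, z.1 ∂π.prod volume = 0 := by
    rw [setIntegral_prod_unitInterval_le π hq hq01 hX, hq_mean]
  refine ⟨Sᶜ.indicator Prod.fst, S.indicator Prod.fst, measurable_fst.indicator hS.compl,
    measurable_fst.indicator hS, fun z => (indicator_compl_add_self_apply S Prod.fst z).symm,
    ?_, ?_, fun z => ?_, fun z => ?_, ?_⟩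
  · rw [integral_indicator hS.compl]
    linarith [integral_add_compl hS (hX.comp_fst (volume : Measure I))]
  · rwa [integral_indicator hS]
  · by_cases hz : z ∈ S <;> simp [hz]
  · by_cases hz : z ∈ S
    · simpa [hz] using indicator_nonneg (fun _ _ => abs_nonneg _) _
    · have hzM : |z.1| ≤ M := not_lt.1 fun h => hz (by simp [S, hq_tail _ h, le_one z.2])
      simp [hz, hzM]
  · have hsq : ∀ z, S.indicator Prod.fst z ^ 2 = S.indicator (fun z => z.1 ^ 2) z := fun z => by
      by_cases hz : z ∈ S <;> simp [hz]
    simp_rw [hsq]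
    rw [integral_indicator hS, setIntegral_prod_unitInterval_le π hq hq01 hX2]
    exact hq_sq

/-- **Truncation decomposition of a centered square-integrable random variable.**
Let `Y` be a centered random variable in `L²` and `M > 0`.  Then on some
(possibly enlarged) probability space there are `Y', Y⁻, Y⁺` with `Y'`
distributed as `Y`, `Y' = Y⁻ + Y⁺`, both parts centered, `Y⁻ Y⁺ = 0` a.s.,
`|Y⁻| ≤ |Y'| 1_{|Y'| ≤ M}` a.s., and `E[(Y⁺)²] ≤ 2 E[Y² 1_{|Y| > M}]`. -/
theorem truncation_decomposition
    {Ω : Type*} [MeasureSpace Ω] [IsProbabilityMeasure (ℙ : Measure Ω)]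
    (Y : Ω → ℝ) (hYmeas : Measurable Y) (hYL2 : MemLp Y 2 ℙ)
    (hYmean : ∫ a, Y a ∂ℙ = 0)
    (M : ℝ) (hM : 0 < M) :
    ∃ (Ω' : Type) (_ : MeasurableSpace Ω') (P' : Measure Ω'),
      IsProbabilityMeasure P' ∧
      ∃ Y' Ym Yp : Ω' → ℝ,
        Measurable Y' ∧ Measurable Ym ∧ Measurable Yp ∧
        Measure.map Y' P' = Measure.map Y ℙ ∧
        (∀ ω, Y' ω = Ym ω + Yp ω) ∧
        (∫ ω, Ym ω ∂P' = 0) ∧ (∫ ω, Yp ω ∂P' = 0) ∧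
        (∀ᵐ ω ∂P', Ym ω * Yp ω = 0) ∧
        (∀ᵐ ω ∂P', |Ym ω| ≤ Set.indicator {x : ℝ | |x| ≤ M} (fun x => |x|) (Y' ω)) ∧
        (∫ ω, (Yp ω) ^ 2 ∂P' ≤ 2 * ∫ a in {a | M < |Y a|}, (Y a) ^ 2 ∂ℙ) := by
  set π := Measure.map Y ℙ
  have : IsProbabilityMeasure π := Measure.isProbabilityMeasure_map hYmeas.aemeasurable
  have hX : Integrable (fun x => x) π :=
    (integrable_map_measure aestronglyMeasurable_id hYmeas.aemeasurable).2
      (hYL2.integrable one_le_two)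
  have hX2 : Integrable (fun x => x ^ 2) π :=
    (integrable_map_measure (by fun_prop) hYmeas.aemeasurable).2 hYL2.integrable_sq
  have hmean : ∫ x, x ∂π = 0 := by
    rwa [integral_map (f := fun x => x) hYmeas.aemeasurable aestronglyMeasurable_id]
  have htail : ∫ x in {x | M < |x|}, x ^ 2 ∂π = ∫ a in {a | M < |Y a|}, Y a ^ 2 ∂ℙ :=
    setIntegral_map (measurableSet_lt measurable_const measurable_abs) (by fun_prop)
      hYmeas.aemeasurable
  obtain ⟨Ym, Yp, hYm, hYp, hsum, hYm_mean, hYp_mean, hprod, hYm_le, hYp_sq⟩ :=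
    exists_decomposition_prod_unitInterval π hM.le hX hX2 hmean
  exact ⟨ℝ × I, inferInstance, π.prod volume, inferInstance, Prod.fst, Ym, Yp, measurable_fst,
    hYm, hYp, by simp [Measure.map_fst_prod, π], hsum, hYm_mean, hYp_mean, .of_forall hprod,
    .of_forall hYm_le, htail ▸ hYp_sq⟩
end

section
/- Dirichlet integral evaluation on the simplex: For every χ ∈ [0,1) and every k ∈ ℕ, the iterated integral of t₁^{−χ}·(t₂−t₁)^{−χ}·⋯·(t_k−t_{k−1})^{−χ}·(1−t_k)^{−χ} over the simplex { (t₁,…,t_k) : 0 < t₁ < t₂ < ⋯ < t_k < 1 } equals Γ(1−χ)^{k+1} / Γ((k+1)·(1−χ)), where Γ denotes the Gamma function. -/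
open MeasureTheory

/-- The extended sequence `0 = u₀ < t₁ < ⋯ < t_k < u_{k+1} = 1` obtained from
`t : Fin k → ℝ` by prepending `0` and appending `1`. -/
noncomputable def extSeq (k : ℕ) (t : Fin k → ℝ) : Fin (k + 2) → ℝ :=
  Fin.cons 0 (Fin.snoc t 1)

/-- The Dirichlet weight `∏_{i=1}^{k+1} (t_i - t_{i-1})^{-χ}` with the
conventions `t₀ = 0`, `t_{k+1} = 1`. -/
noncomputable def dirichletWeight (χ : ℝ) (k : ℕ) (t : Fin k → ℝ) : ℝ :=
  ∏ i : Fin (k + 1), (extSeq k t i.succ - extSeq k t i.castSucc) ^ (-χ)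

/-!
Integrating out `t₁ ∈ (0, t₂)` is a Beta integral,
`∫₀^{t₂} t₁^{a₀-1} (t₂-t₁)^{a₁-1} dt₁ = B(a₀, a₁) t₂^{a₀+a₁-1}`,
so the integral over the `k`-simplex of the Dirichlet density with exponents `(a₀, …, a_k)` is
`B(a₀, a₁)` times the integral over the `(k-1)`-simplex of the density with exponents
`(a₀ + a₁, a₂, …, a_k)`. By induction it equals `∏ Γ(aᵢ) / Γ(∑ aᵢ)`, and the theorem is the case
`aᵢ = 1 - χ`.
-/

open Set ProbabilityTheory
open scoped ENNReal

lemma lintegral_fin_cons {α : Type*} [MeasureSpace α] [SigmaFinite (volume : Measure α)] {k : ℕ}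
    {F : (Fin (k + 1) → α) → ℝ≥0∞} (hF : Measurable F) :
    ∫⁻ t, F t = ∫⁻ u : Fin k → α, ∫⁻ x : α, F (Fin.cons x u) := by
  have hcons := (volume_preserving_piFinSuccAbove (fun _ : Fin (k + 1) => α) 0).symm
  rw [← hcons.lintegral_comp hF, Measure.volume_eq_prod]
  refine (lintegral_prod_symm _ (hF.comp hcons.measurable).aemeasurable).trans ?_
  simp [MeasurableEquiv.piFinSuccAbove_symm_apply, Fin.insertNthEquiv]

lemma lintegral_Ioo_rpow_mul_one_sub_rpow {a b : ℝ} (ha : 0 < a) (hb : 0 < b) :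
    ∫⁻ y in Ioo 0 1, ENNReal.ofReal (y ^ (a - 1) * (1 - y) ^ (b - 1))
      = ENNReal.ofReal (beta a b) := by
  have hB := one_div_pos.2 (beta_pos ha hb)
  have h := lintegral_betaPDF_eq_one ha hb
  simp_rw [lintegral_betaPDF, mul_assoc, ENNReal.ofReal_mul hB.le] at h
  rw [lintegral_const_mul _ (by fun_prop), mul_comm] at h
  rw [ENNReal.eq_inv_of_mul_eq_one_left h, ← ENNReal.ofReal_inv_of_pos hB, one_div, inv_inv]

lemma lintegral_Ioo_rpow_mul_sub_rpow {a b q : ℝ} (ha : 0 < a) (hb : 0 < b) (hq : 0 < q) :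
    ∫⁻ x in Ioo 0 q, ENNReal.ofReal (x ^ (a - 1) * (q - x) ^ (b - 1))
      = ENNReal.ofReal (q ^ (a + b - 1) * beta a b) := by
  have hscale : (q * ·) '' Ioo 0 1 = Ioo 0 q := by
    rw [image_mul_left_Ioo hq, mul_zero, mul_one]
  have hderiv (y : ℝ) : HasDerivWithinAt (q * ·) q (Ioo 0 1) y := by
    simpa using ((hasDerivAt_id y).const_mul q).hasDerivWithinAt
  have hintegrand : EqOn
      (fun y => ENNReal.ofReal |q| * ENNReal.ofReal ((q * y) ^ (a - 1) * (q - q * y) ^ (b - 1)))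
      (fun y => ENNReal.ofReal (q ^ (a + b - 1)) * ENNReal.ofReal (y ^ (a - 1) * (1 - y) ^ (b - 1)))
      (Ioo 0 1) := by
    rintro y ⟨hy0, hy1⟩
    have hsplit : q ^ (a + b - 1) = q * q ^ (a - 1) * q ^ (b - 1) := by
      rw [show a + b - 1 = 1 + (a - 1) + (b - 1) by ring, Real.rpow_add hq, Real.rpow_add hq,
        Real.rpow_one]
    dsimp only
    rw [abs_of_pos hq, ← ENNReal.ofReal_mul hq.le, ← ENNReal.ofReal_mul (by positivity),
      show q - q * y = q * (1 - y) by ring, Real.mul_rpow hq.le hy0.le,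
      Real.mul_rpow hq.le (by linarith), hsplit]
    congr 1
    ring
  rw [← hscale, lintegral_image_eq_lintegral_abs_deriv_mul measurableSet_Ioo
      (fun y _ => hderiv y) (mul_right_injective₀ hq.ne').injOn,
    setLIntegral_congr_fun measurableSet_Ioo hintegrand, lintegral_const_mul _ (by fun_prop),
    lintegral_Ioo_rpow_mul_one_sub_rpow ha hb, ← ENNReal.ofReal_mul (by positivity)]

section Dirichlet

variable {k : ℕ}

def orderedSimplex (k : ℕ) : Set (Fin k → ℝ) := {t | StrictMono (extSeq k t)}

noncomputable def extGap (k : ℕ) (t : Fin k → ℝ) (i : Fin (k + 1)) : ℝ :=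
  extSeq k t i.succ - extSeq k t i.castSucc

lemma continuous_extSeq (k : ℕ) : Continuous (extSeq k) :=
  continuous_const.finCons (continuous_id.finSnoc (A := fun _ => ℝ) continuous_const)

lemma measurable_extGap (i : Fin (k + 1)) : Measurable fun t => extGap k t i :=
  ((continuous_apply _).comp (continuous_extSeq k)).measurable.sub
    ((continuous_apply _).comp (continuous_extSeq k)).measurable

lemma mem_orderedSimplex_iff {t : Fin k → ℝ} :
    t ∈ orderedSimplex k ↔ ∀ i, 0 < extGap k t i := by
  simp only [extGap, sub_pos]
  exact Fin.strictMono_iff_lt_succ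

lemma measurableSet_orderedSimplex (k : ℕ) : MeasurableSet (orderedSimplex k) := by
  have : orderedSimplex k = ⋂ i, {t | 0 < extGap k t i} := by
    ext t; simp [mem_orderedSimplex_iff]
  exact this ▸ MeasurableSet.iInter fun i => measurableSet_lt measurable_const (measurable_extGap i)

lemma extGap_zero (t : Fin k → ℝ) : extGap k t 0 = extSeq k t 1 := by
  simp [extGap, extSeq]

lemma extSeq_cons_one (x : ℝ) (u : Fin k → ℝ) : extSeq (k + 1) (Fin.cons x u) 1 = x := by
  simp [extSeq]

lemma extSeq_cons_succ_succ (x : ℝ) (u : Fin k → ℝ) (i : Fin (k + 1)) :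
    extSeq (k + 1) (Fin.cons x u) i.succ.succ = extSeq k u i.succ := by
  simp only [extSeq, Fin.cons_succ]
  rw [← Fin.cons_snoc_eq_snoc_cons, Fin.cons_succ]

lemma extGap_cons_zero (x : ℝ) (u : Fin k → ℝ) : extGap (k + 1) (Fin.cons x u) 0 = x := by
  rw [extGap_zero, extSeq_cons_one]

lemma extGap_cons_one (x : ℝ) (u : Fin k → ℝ) :
    extGap (k + 1) (Fin.cons x u) 1 = extSeq k u 1 - x := by
  rw [extGap, ← Fin.succ_zero_eq_one, extSeq_cons_succ_succ, ← Fin.succ_castSucc,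
    Fin.castSucc_zero]
  simp [extSeq]

lemma extGap_cons_succ_succ (x : ℝ) (u : Fin k → ℝ) (i : Fin k) :
    extGap (k + 1) (Fin.cons x u) i.succ.succ = extGap k u i.succ := by
  rw [extGap, extGap, ← Fin.succ_castSucc i.succ, ← Fin.succ_castSucc i, extSeq_cons_succ_succ,
    extSeq_cons_succ_succ]

lemma cons_mem_orderedSimplex_iff {x : ℝ} {u : Fin k → ℝ} :
    Fin.cons x u ∈ orderedSimplex (k + 1) ↔ u ∈ orderedSimplex k ∧ x ∈ Ioo 0 (extSeq k u 1) := by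
  simp only [mem_orderedSimplex_iff, Fin.forall_fin_succ, Fin.succ_zero_eq_one,
    extGap_cons_one, extGap_cons_succ_succ, extGap_zero, mem_Ioo, sub_pos]
  constructor
  · rintro ⟨hx, hxq, hgaps⟩
    exact ⟨⟨hx.trans hxq, hgaps⟩, hx, hxq⟩
  · rintro ⟨⟨-, hgaps⟩, hx, hxq⟩
    exact ⟨hx, hxq, hgaps⟩

noncomputable def dirichletDensity (k : ℕ) (a : Fin (k + 1) → ℝ) (t : Fin k → ℝ) : ℝ :=
  ∏ i, extGap k t i ^ (a i - 1)

lemma measurable_dirichletDensity (a : Fin (k + 1) → ℝ) : Measurable (dirichletDensity k a) :=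
  Finset.measurable_prod _ fun i _ => (measurable_extGap i).pow_const _

lemma dirichletDensity_cons (a : Fin (k + 2) → ℝ) (x : ℝ) (u : Fin k → ℝ) :
    dirichletDensity (k + 1) a (Fin.cons x u)
      = x ^ (a 0 - 1) * (extSeq k u 1 - x) ^ (a 1 - 1)
        * ∏ i : Fin k, extGap k u i.succ ^ (a i.succ.succ - 1) := by
  simp only [dirichletDensity, Fin.prod_univ_succ, Fin.succ_zero_eq_one, extGap_cons_zero,
    extGap_cons_one, extGap_cons_succ_succ, mul_assoc]

def mergeHead (a : Fin (k + 2) → ℝ) : Fin (k + 1) → ℝ :=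
  Fin.cons (a 0 + a 1) fun i => a i.succ.succ

lemma dirichletDensity_mergeHead (a : Fin (k + 2) → ℝ) (u : Fin k → ℝ) :
    dirichletDensity k (mergeHead a) u
      = extSeq k u 1 ^ (a 0 + a 1 - 1) * ∏ i : Fin k, extGap k u i.succ ^ (a i.succ.succ - 1) := by
  simp only [dirichletDensity, Fin.prod_univ_succ, mergeHead, Fin.cons_zero, Fin.cons_succ,
    extGap_zero]

noncomputable def multiBeta {ι : Type*} [Fintype ι] (a : ι → ℝ) : ℝ :=
  (∏ i, Real.Gamma (a i)) / Real.Gamma (∑ i, a i)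

lemma beta_mul_multiBeta_mergeHead (a : Fin (k + 2) → ℝ) (h : Real.Gamma (a 0 + a 1) ≠ 0) :
    beta (a 0) (a 1) * multiBeta (mergeHead a) = multiBeta a := by
  simp only [multiBeta, beta, mergeHead, Fin.prod_univ_succ, Fin.sum_univ_succ, Fin.cons_zero,
    Fin.cons_succ, Fin.succ_zero_eq_one, ← add_assoc]
  field_simp

lemma lintegral_cons_indicator_orderedSimplex (a : Fin (k + 2) → ℝ) (ha0 : 0 < a 0)
    (ha1 : 0 < a 1) (u : Fin k → ℝ) :
    ∫⁻ x, (orderedSimplex (k + 1)).indicator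
        (fun t => ENNReal.ofReal (dirichletDensity (k + 1) a t)) (Fin.cons x u)
      = (orderedSimplex k).indicator (fun u => ENNReal.ofReal (beta (a 0) (a 1))
          * ENNReal.ofReal (dirichletDensity k (mergeHead a) u)) u := by
  by_cases hu : u ∈ orderedSimplex k
  · have hq : 0 < extSeq k u 1 := extGap_zero u ▸ mem_orderedSimplex_iff.1 hu 0
    set q := extSeq k u 1
    set R := ∏ i : Fin k, extGap k u i.succ ^ (a i.succ.succ - 1)
    have hslice : (fun x => (orderedSimplex (k + 1)).indicator
        (fun t => ENNReal.ofReal (dirichletDensity (k + 1) a t)) (Fin.cons x u))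
        = (Ioo 0 q).indicator
          fun x => ENNReal.ofReal (x ^ (a 0 - 1) * (q - x) ^ (a 1 - 1)) * ENNReal.ofReal R := by
      ext x
      by_cases hx : x ∈ Ioo 0 q
      · rw [indicator_of_mem (cons_mem_orderedSimplex_iff.2 ⟨hu, hx⟩), indicator_of_mem hx,
          dirichletDensity_cons, ENNReal.ofReal_mul
            (mul_nonneg (Real.rpow_nonneg hx.1.le _) (Real.rpow_nonneg (sub_pos.2 hx.2).le _))]
      · rw [indicator_of_notMem (fun h => hx (cons_mem_orderedSimplex_iff.1 h).2),
          indicator_of_notMem hx]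
    rw [hslice, lintegral_indicator measurableSet_Ioo, lintegral_mul_const _ (by fun_prop),
      lintegral_Ioo_rpow_mul_sub_rpow ha0 ha1 hq, indicator_of_mem hu, dirichletDensity_mergeHead,
      ENNReal.ofReal_mul (by positivity), ENNReal.ofReal_mul (by positivity)]
    ring
  · simp [indicator_of_notMem, cons_mem_orderedSimplex_iff, hu]

lemma lintegral_orderedSimplex_succ (a : Fin (k + 2) → ℝ) (ha0 : 0 < a 0) (ha1 : 0 < a 1) :
    ∫⁻ t in orderedSimplex (k + 1), ENNReal.ofReal (dirichletDensity (k + 1) a t)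
      = ENNReal.ofReal (beta (a 0) (a 1))
        * ∫⁻ u in orderedSimplex k, ENNReal.ofReal (dirichletDensity k (mergeHead a) u) := by
  rw [← lintegral_indicator (measurableSet_orderedSimplex _),
    lintegral_fin_cons ((measurable_dirichletDensity a).ennreal_ofReal.indicator
      (measurableSet_orderedSimplex _)),
    ← lintegral_const_mul _ (measurable_dirichletDensity _).ennreal_ofReal,
    ← lintegral_indicator (measurableSet_orderedSimplex _)]
  simp_rw [lintegral_cons_indicator_orderedSimplex a ha0 ha1]

theorem lintegral_orderedSimplex_dirichletDensity (a : Fin (k + 1) → ℝ) (ha : ∀ i, 0 < a i) :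
    ∫⁻ t in orderedSimplex k, ENNReal.ofReal (dirichletDensity k a t)
      = ENNReal.ofReal (multiBeta a) := by
  induction k with
  | zero =>
    have hgap (t : Fin 0 → ℝ) : extGap 0 t 0 = 1 := by
      simp only [extGap, extSeq, Fin.cons_succ, Fin.castSucc_zero, Fin.cons_zero, sub_zero]
      exact Fin.snoc_last (α := fun _ => ℝ) (p := t) 1
    have hS : orderedSimplex 0 = univ := eq_univ_of_forall fun t =>
      mem_orderedSimplex_iff.2 fun i => by rw [Fin.fin_one_eq_zero i, hgap]; exact one_pos
    simp [hS, dirichletDensity, hgap, multiBeta, (Real.Gamma_pos_of_pos (ha 0)).ne', volume_pi]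
  | succ k ih =>
    have hmerge : ∀ i, 0 < mergeHead a i :=
      Fin.cases (add_pos (ha 0) (ha 1)) fun i => ha i.succ.succ
    rw [lintegral_orderedSimplex_succ a (ha 0) (ha 1), ih _ hmerge,
      ← ENNReal.ofReal_mul (beta_pos (ha 0) (ha 1)).le,
      beta_mul_multiBeta_mergeHead a (Real.Gamma_pos_of_pos (add_pos (ha 0) (ha 1))).ne']

end Dirichlet

theorem dirichlet_integral_simplex_general (χ : ℝ) (hχ1 : χ < 1) (k : ℕ) :
    ∫⁻ t in {t : Fin k → ℝ | StrictMono (extSeq k t)},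
        ENNReal.ofReal (dirichletWeight χ k t)
      = ENNReal.ofReal
          (Real.Gamma (1 - χ) ^ (k + 1) / Real.Gamma (((k : ℝ) + 1) * (1 - χ))) := by
  have hweight : dirichletWeight χ k = dirichletDensity k fun _ => 1 - χ := by
    ext t
    simp [dirichletWeight, dirichletDensity, extGap]
  have hconst : multiBeta (fun _ : Fin (k + 1) => 1 - χ)
      = Real.Gamma (1 - χ) ^ (k + 1) / Real.Gamma (((k : ℝ) + 1) * (1 - χ)) := by
    rw [multiBeta, Finset.prod_const, Finset.sum_const, Finset.card_univ, Fintype.card_fin,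
      nsmul_eq_mul]
    push_cast
    rfl
  rw [hweight, ← hconst]
  exact lintegral_orderedSimplex_dirichletDensity _ fun _ => sub_pos.2 hχ1

/-- **Dirichlet integral evaluation on the simplex.**
For `χ ∈ [0,1)` and `k ≥ 1`, the integral of
`t₁^{-χ} (t₂-t₁)^{-χ} ⋯ (t_k-t_{k-1})^{-χ} (1-t_k)^{-χ}` over the open simplex
`{0 < t₁ < ⋯ < t_k < 1}` equals `Γ(1-χ)^{k+1} / Γ((k+1)(1-χ))`. -/
theorem dirichlet_integral_simplex (χ : ℝ) (hχ0 : 0 ≤ χ) (hχ1 : χ < 1)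
    (k : ℕ) (hk : 1 ≤ k) :
    ∫⁻ t in {t : Fin k → ℝ | StrictMono (extSeq k t)},
        ENNReal.ofReal (dirichletWeight χ k t)
      = ENNReal.ofReal
          (Real.Gamma (1 - χ) ^ (k + 1) / Real.Gamma (((k : ℝ) + 1) * (1 - χ))) :=
  dirichlet_integral_simplex_general χ hχ1 k
end

section
/- At most six points can be closer to the origin than to each other: Let x₁, …, x_k be distinct points of ℝ² ∖ {0} such that for all i ≠ j one has ‖x_i‖ ≤ ‖x_i − x_j‖ (each point is at least as close to the origin as to every other point of the collection). Then k ≤ 6. -/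
/-!
If `‖x‖ ≤ ‖x - y‖` then `2 ⟪x, y⟫ ≤ ‖y‖²`. Applied in both directions this gives
`⟪x, y⟫ ≤ ‖x‖ ‖y‖ / 2`, so any two of the points subtend an angle of at least `π / 3` at the origin.
Cutting the plane into six half-open sectors of opening `π / 3` according to the argument, seven
points would put two in the same sector, at an angle less than `π / 3`.
-/

open Real Set InnerProductGeometry RealInnerProductSpace

theorem exists_ne_abs_sub_lt_of_mem_Ioc {ι : Type*} [Fintype ι] {t : ι → ℝ} {b δ : ℝ} {n : ℕ}
    (hδ : 0 < δ) (ht : ∀ i, t i ∈ Ioc (b - n * δ) b) (hn : n < Fintype.card ι) :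
    ∃ i j, i ≠ j ∧ |t i - t j| < δ := by
  have hmaps : ∀ i ∈ Finset.univ, ⌊(b - t i) / δ⌋ ∈ Finset.Ico (0 : ℤ) n := by
    intro i _
    obtain ⟨hlo, hhi⟩ := ht i
    rw [Finset.mem_Ico, Int.floor_nonneg, Int.floor_lt, div_lt_iff₀ hδ]
    exact ⟨div_nonneg (sub_nonneg.2 hhi) hδ.le, by push_cast; linarith⟩
  obtain ⟨i, -, j, -, hij, hfloor⟩ :=
    Finset.exists_ne_map_eq_of_card_lt_of_maps_to (by simpa using hn) hmaps
  refine ⟨i, j, hij, ?_⟩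
  have h := Int.abs_sub_lt_one_of_floor_eq_floor hfloor
  rwa [← sub_div, sub_sub_sub_cancel_left, abs_div, abs_of_pos hδ, div_lt_one hδ,
    abs_sub_comm] at h

section InnerProductSpace

variable {V : Type*} [NormedAddCommGroup V] [InnerProductSpace ℝ V] {x y : V}

theorem two_mul_inner_le_norm_sq_of_norm_le_norm_sub (h : ‖x‖ ≤ ‖x - y‖) :
    2 * ⟪x, y⟫ ≤ ‖y‖ ^ 2 := by
  have := pow_le_pow_left₀ (norm_nonneg x) h 2
  rw [norm_sub_sq_real] at this
  linarith

theorem pi_div_three_le_angle_of_norm_le_norm_sub (hxy : ‖x‖ ≤ ‖x - y‖) (hyx : ‖y‖ ≤ ‖y - x‖) :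
    π / 3 ≤ angle x y := by
  have hx := two_mul_inner_le_norm_sq_of_norm_le_norm_sub hxy
  have hy := two_mul_inner_le_norm_sq_of_norm_le_norm_sub hyx
  rw [real_inner_comm] at hy
  -- `2 ⟪x, y⟫ ≤ min ‖x‖² ‖y‖² ≤ ‖x‖ ‖y‖`
  have hinner : ⟪x, y⟫ ≤ 1 / 2 * (‖x‖ * ‖y‖) := by
    rcases le_total ‖x‖ ‖y‖ with h | h
    · nlinarith [norm_nonneg x]
    · nlinarith [norm_nonneg y]
  rw [← arccos_eq_of_eq_cos (by positivity) (by linarith [pi_pos]) cos_pi_div_three.symm]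
  exact arccos_le_arccos (div_le_of_le_mul₀ (by positivity) (by norm_num) hinner)

end InnerProductSpace

theorem Complex.angle_eq_abs_arg_sub {x y : ℂ} (hx : x ≠ 0) (hy : y ≠ 0)
    (h : x.arg - y.arg ∈ Ioc (-π) π) : angle x y = |x.arg - y.arg| := by
  rw [angle_eq_abs_arg hx hy, ← arg_coe_angle_toReal_eq_arg, arg_div_coe_angle hx hy,
    ← Real.Angle.coe_sub, Real.Angle.toReal_coe_eq_self_iff_mem_Ioc.2 h]

theorem at_most_six_points_closer_to_origin_general
    (k : ℕ) (x : Fin k → EuclideanSpace ℝ (Fin 2))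
    (hne : ∀ i, x i ≠ 0)
    (hclose : ∀ i j, i ≠ j → ‖x i‖ ≤ ‖x i - x j‖) :
    k ≤ 6 := by
  by_contra! hk
  set e := Complex.orthonormalBasisOneI.repr
  set z : Fin k → ℂ := fun i => e.symm (x i)
  have hz : ∀ i, z i ≠ 0 := fun i => by simpa [z] using hne i
  have harg : ∀ i, (z i).arg ∈ Ioc (π - (6 : ℕ) * (π / 3)) π := fun i => by
    convert Complex.arg_mem_Ioc (z i) using 2; push_cast; ring
  obtain ⟨i, j, hij, hlt⟩ :=
    exists_ne_abs_sub_lt_of_mem_Ioc (by positivity) harg (by simpa using hk)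
  obtain ⟨hlo, hhi⟩ := abs_lt.1 hlt
  have hmem : (z i).arg - (z j).arg ∈ Ioc (-π) π := ⟨by linarith [pi_pos], by linarith [pi_pos]⟩
  have hangle : angle (x i) (x j) = |(z i).arg - (z j).arg| := by
    rw [← e.symm.toLinearIsometry.angle_map (x i) (x j)]
    exact Complex.angle_eq_abs_arg_sub (hz i) (hz j) hmem
  linarith [pi_div_three_le_angle_of_norm_le_norm_sub (hclose i j hij) (hclose j i hij.symm)]

/-- **At most six points can be closer to the origin than to each other.**
If `x₁, …, x_k` are distinct nonzero points of `ℝ²` such that for all `i ≠ j`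
one has `‖x_i‖ ≤ ‖x_i − x_j‖`, then `k ≤ 6`. -/
theorem at_most_six_points_closer_to_origin
    (k : ℕ) (x : Fin k → EuclideanSpace ℝ (Fin 2))
    (hinj : Function.Injective x)
    (hne : ∀ i, x i ≠ 0)
    (hclose : ∀ i j, i ≠ j → ‖x i‖ ≤ ‖x i - x j‖) :
    k ≤ 6 :=
  at_most_six_points_closer_to_origin_general k x hne hclose
end

section
/- Rearrangement bound for the inverse square-root potential in the plane: For every Lebesgue-measurable set A ⊆ ℝ² of finite Lebesgue measure |A| and every point y ∈ ℝ², one has ∫_A ‖x − y‖^{−1/2} dx ≤ (4/3)·π^{1/4}·|A|^{3/4}. -/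
/-!
By the layer-cake formula, `∫_A f = ∫_0^∞ |{x ∈ A | f x > t}| dt` for `f x = ‖x - y‖^{-1/2}`.
The superlevel set `{f > t}` is the disc of radius `t⁻²` about `y`, so its part in `A` has measure
at most `min |A| (π t⁻⁴)`. Integrating the first bound up to `T` and the second beyond `T` gives
`|A| T + π T⁻³ / 3`, which at the optimal cut `T = (π / |A|)^{1/4}` equals
`(4/3) π^{1/4} |A|^{3/4}`. The same argument bounds `∫_A f` for any `f` in weak `Lᵖ`, `p > 1`.
-/

open MeasureTheory Set Metric

section WeakType

variable {α : Type*} [MeasurableSpace α] {μ : Measure α} [IsFiniteMeasure μ] {f : α → ℝ}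
  {p C : ℝ}

theorem lintegral_ofReal_le_of_meas_lt_le_rpow_neg_split (hf_nonneg : 0 ≤ᵐ[μ] f)
    (hf : AEMeasurable f μ) (hp : 1 < p) (hC : 0 ≤ C)
    (hweak : ∀ t, 0 < t → μ {x | t < f x} ≤ ENNReal.ofReal (C * t ^ (-p)))
    {T : ℝ} (hT : 0 < T) :
    ∫⁻ x, ENNReal.ofReal (f x) ∂μ
      ≤ ENNReal.ofReal (μ.real univ * T + C * T ^ (1 - p) / (p - 1)) := by
  have head : ∫⁻ t in Ioc 0 T, μ {x | t < f x} ≤ ENNReal.ofReal (μ.real univ * T) :=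
    calc ∫⁻ t in Ioc 0 T, μ {x | t < f x}
        ≤ ∫⁻ _ in Ioc 0 T, μ univ := lintegral_mono fun _ => measure_mono (subset_univ _)
      _ = ENNReal.ofReal (μ.real univ * T) := by
        rw [setLIntegral_const, Real.volume_Ioc, sub_zero, ENNReal.ofReal_mul measureReal_nonneg,
          ofReal_measureReal]
  have tail : ∫⁻ t in Ioi T, μ {x | t < f x} ≤ ENNReal.ofReal (C * T ^ (1 - p) / (p - 1)) :=
    calc ∫⁻ t in Ioi T, μ {x | t < f x}
        ≤ ∫⁻ t in Ioi T, ENNReal.ofReal (C * t ^ (-p)) :=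
          setLIntegral_mono (by fun_prop) fun t ht => hweak t (hT.trans ht)
      _ = ENNReal.ofReal (∫ t in Ioi T, C * t ^ (-p)) := by
          rw [ofReal_integral_eq_lintegral_ofReal
            ((integrableOn_Ioi_rpow_of_lt (by linarith) hT).const_mul C)]
          filter_upwards [self_mem_ae_restrict measurableSet_Ioi] with t ht
          exact mul_nonneg hC (Real.rpow_nonneg (hT.trans ht).le _)
      _ = ENNReal.ofReal (C * T ^ (1 - p) / (p - 1)) := by
          rw [integral_const_mul, integral_Ioi_rpow_of_lt (by linarith) hT,
            show -p + 1 = 1 - p by ring, neg_div, ← div_neg, neg_sub, mul_div_assoc]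
  calc ∫⁻ x, ENNReal.ofReal (f x) ∂μ
      = ∫⁻ t in Ioi 0, μ {x | t < f x} := lintegral_eq_lintegral_meas_lt μ hf_nonneg hf
    _ = (∫⁻ t in Ioc 0 T, μ {x | t < f x}) + ∫⁻ t in Ioi T, μ {x | t < f x} := by
        rw [← Ioc_union_Ioi_eq_Ioi hT.le,
          lintegral_union measurableSet_Ioi (Ioc_disjoint_Ioi le_rfl)]
    _ ≤ _ := by
        rw [ENNReal.ofReal_add (by positivity)
          (div_nonneg (mul_nonneg hC (Real.rpow_nonneg hT.le _)) (sub_pos.2 hp).le)]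
        exact add_le_add head tail

theorem lintegral_ofReal_le_of_meas_lt_le_rpow_neg (hf_nonneg : 0 ≤ᵐ[μ] f)
    (hf : AEMeasurable f μ) (hp : 1 < p) (hC : 0 < C)
    (hweak : ∀ t, 0 < t → μ {x | t < f x} ≤ ENNReal.ofReal (C * t ^ (-p))) :
    ∫⁻ x, ENNReal.ofReal (f x) ∂μ
      ≤ ENNReal.ofReal (p / (p - 1) * C ^ p⁻¹ * μ.real univ ^ (1 - p⁻¹)) := by
  rcases (measureReal_nonneg (μ := μ) (s := univ)).eq_or_lt with hv | hv
  · rw [eq_comm, measureReal_eq_zero_iff, Measure.measure_univ_eq_zero] at hv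
    simp [hv]
  set v := μ.real univ
  -- the cut minimising `v T + C T^{1-p} / (p - 1)`
  set T := (C / v) ^ p⁻¹ with hT
  have hp0 : p ≠ 0 := by positivity
  have hp1 : p - 1 ≠ 0 := (sub_pos.2 hp).ne'
  have hvT : v * T = C ^ p⁻¹ * v ^ (1 - p⁻¹) := by
    rw [hT, Real.div_rpow hC.le hv.le, Real.rpow_sub hv, Real.rpow_one]
    field_simp
  have hCT : C * T ^ (1 - p) = C ^ p⁻¹ * v ^ (1 - p⁻¹) := by
    rw [hT, ← Real.rpow_mul (div_pos hC hv).le, show p⁻¹ * (1 - p) = p⁻¹ - 1 by field_simp,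
      Real.div_rpow hC.le hv.le, Real.rpow_sub hC, Real.rpow_sub hv, Real.rpow_sub hv,
      Real.rpow_one, Real.rpow_one]
    field_simp
  calc ∫⁻ x, ENNReal.ofReal (f x) ∂μ
      ≤ ENNReal.ofReal (v * T + C * T ^ (1 - p) / (p - 1)) :=
        lintegral_ofReal_le_of_meas_lt_le_rpow_neg_split hf_nonneg hf hp hC.le hweak
          (by positivity)
    _ = ENNReal.ofReal (p / (p - 1) * C ^ p⁻¹ * v ^ (1 - p⁻¹)) := by
        rw [hvT, hCT]
        congr 1
        field_simp
        ring

end WeakType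

theorem setOf_lt_rpow_neg_norm_sub_subset_ball {E : Type*} [SeminormedAddCommGroup E] (y : E)
    {s t : ℝ} (hs : 0 < s) (ht : 0 < t) :
    {x | t < ‖x - y‖ ^ (-s)} ⊆ ball y (t ^ (-s⁻¹)) := by
  intro x hx
  have hxy : 0 < ‖x - y‖ := by
    refine (norm_nonneg _).lt_of_ne fun h => ?_
    rw [mem_ofPred_eq, ← h, Real.zero_rpow (neg_ne_zero.2 hs.ne')] at hx
    exact ht.not_gt hx
  have := Real.rpow_lt_rpow_of_neg ht hx (neg_lt_zero.2 (inv_pos.2 hs))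
  rwa [← Real.rpow_mul hxy.le, neg_mul_neg, mul_inv_cancel₀ hs.ne', Real.rpow_one,
    ← dist_eq_norm] at this

theorem volume_setOf_lt_rpow_neg_norm_sub_le (y : EuclideanSpace ℝ (Fin 2)) {s t : ℝ}
    (hs : 0 < s) (ht : 0 < t) :
    volume {x | t < ‖x - y‖ ^ (-s)} ≤ ENNReal.ofReal (Real.pi * t ^ (-(2 / s))) := by
  refine (measure_mono (setOf_lt_rpow_neg_norm_sub_subset_ball y hs ht)).trans_eq ?_
  rw [EuclideanSpace.volume_ball_fin_two, ← ENNReal.ofReal_pow (Real.rpow_nonneg ht.le _),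
    ← Real.rpow_mul_natCast ht.le, ← ENNReal.ofReal_mul (Real.rpow_nonneg ht.le _), mul_comm]
  congr 3
  push_cast
  ring

theorem inverse_sqrt_potential_rearrangement_bound_general
    (A : Set (EuclideanSpace ℝ (Fin 2)))
    (hAfin : volume A < ⊤) (y : EuclideanSpace ℝ (Fin 2)) :
    ∫⁻ x in A, ENNReal.ofReal (‖x - y‖ ^ (-(1 / 2) : ℝ)) ∂volume
      ≤ ENNReal.ofReal
          ((4 / 3) * Real.pi ^ ((1 / 4 : ℝ)) * (volume A).toReal ^ ((3 / 4 : ℝ))) := by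
  have : IsFiniteMeasure (volume.restrict A) := isFiniteMeasure_restrict.2 hAfin.ne
  have hweak : ∀ t : ℝ, 0 < t → volume.restrict A {x | t < ‖x - y‖ ^ (-(1 / 2) : ℝ)}
      ≤ ENNReal.ofReal (Real.pi * t ^ (-4 : ℝ)) := fun t ht =>
    (Measure.restrict_le_self _).trans <|
      (volume_setOf_lt_rpow_neg_norm_sub_le y one_half_pos ht).trans_eq (by norm_num)
  convert lintegral_ofReal_le_of_meas_lt_le_rpow_neg
    (ae_of_all _ fun x => Real.rpow_nonneg (norm_nonneg (x - y)) _) (by fun_prop)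
    (by norm_num) Real.pi_pos hweak using 3
  · norm_num
  · rw [measureReal_def, Measure.restrict_apply_univ]
    norm_num

/-- **Rearrangement bound for the inverse square-root potential in the plane.**
For every measurable `A ⊆ ℝ²` of finite Lebesgue measure and every `y ∈ ℝ²`,
`∫_A ‖x − y‖^{−1/2} dx ≤ (4/3) π^{1/4} |A|^{3/4}`. -/
theorem inverse_sqrt_potential_rearrangement_bound
    (A : Set (EuclideanSpace ℝ (Fin 2))) (hA : MeasurableSet A)
    (hAfin : volume A < ⊤) (y : EuclideanSpace ℝ (Fin 2)) :
    ∫⁻ x in A, ENNReal.ofReal (‖x - y‖ ^ (-(1 / 2) : ℝ)) ∂volume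
      ≤ ENNReal.ofReal
          ((4 / 3) * Real.pi ^ ((1 / 4 : ℝ)) * (volume A).toReal ^ ((3 / 4 : ℝ))) :=
  inverse_sqrt_potential_rearrangement_bound_general A hAfin y
end

section
/- Decoupling inequality for the Ising model with plus boundary condition: Fix β ≥ 0 and a finite set Λ ⊆ ℤ². Let x₁, …, x_n be distinct points of Λ and suppose x_i ∈ Λ_i ⊆ Λ for subsets Λ₁, …, Λ_n satisfying Λ_i ∩ (Λ_j ∪ ∂Λ_j) = ∅ for all i ≠ j. Then 0 ≤ E⁺_Λ[σ_{x₁}·σ_{x₂}⋯σ_{x_n}] ≤ ∏_{i=1}^n E⁺_{Λ_i}[σ_{x_i}], where E⁺_Γ denotes expectation under the Ising measure on Γ with plus boundary condition at inverse temperature β. -/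
/-!
Write the plus-boundary Ising weight as `exp (∑_b J_b σ^{K_b})` with ferromagnetic two-spin
couplings, one per ordered nearest-neighbour pair meeting `Λ`, the boundary spins being the
constant `+1`. The first Griffiths inequality gives `0 ≤ E⁺_Λ[σ_{x₁} ⋯ σ_{x_n}]`.

Pinning the spins of `W = Λ ∖ ⋃ᵢ Λᵢ` to `+1` amounts to the weight
`∏_{v ∈ W} (1 + σ_v) = ∑_{T ⊆ W} σ_T`, and the second Griffiths inequality, applied term by term,
shows that pinning does not decrease the correlation. Once `W` is pinned, no bond joins two blocks
(`Λᵢ` avoids `Λⱼ ∪ ∂Λⱼ`) and every spin around a block is `+1`, so the Hamiltonian of `Λ` is a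
constant plus the sum of the plus-boundary Hamiltonians of the blocks: the pinned correlation
factorises into `∏ᵢ E⁺_{Λᵢ}[σ_{xᵢ}]`.
-/

open Finset

namespace IsingDecoupling

/-- The four nearest neighbors of a point of `ℤ²`. -/
def nbrs (x : ℤ × ℤ) : Finset (ℤ × ℤ) :=
  {(x.1 + 1, x.2), (x.1 - 1, x.2), (x.1, x.2 + 1), (x.1, x.2 - 1)}

/-- The spin (`±1`) at site `x` of the configuration `ε` on `Λ`; sites outside
`Λ` are given the boundary value `+1`. -/
def spinAt (Λ : Finset (ℤ × ℤ)) (ε : {z // z ∈ Λ} → Bool) (x : ℤ × ℤ) : ℝ :=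
  if h : x ∈ Λ then (if ε ⟨x, h⟩ then 1 else -1) else 1

/-- The Boltzmann weight of a configuration `ε` on `Λ` for the Ising model with
plus boundary condition at inverse temperature `β`: the exponential of
`β ∑_{x∼y ∈ Λ} σ_x σ_y + β ∑_{x∈Λ} h⁺_x σ_x`,
where `h⁺_x` is the number of neighbors of `x` outside `Λ` (the sum over
unordered nearest-neighbor pairs inside `Λ` is written as half the sum over
ordered pairs). -/
noncomputable def weight (β : ℝ) (Λ : Finset (ℤ × ℤ)) (ε : {z // z ∈ Λ} → Bool) : ℝ :=
  Real.exp
    (β * ((∑ x ∈ Λ, ∑ y ∈ Λ.filter (fun y => y ∈ nbrs x),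
        spinAt Λ ε x * spinAt Λ ε y) / 2)
      + β * ∑ x ∈ Λ, (((nbrs x).filter (fun y => y ∉ Λ)).card : ℝ) * spinAt Λ ε x)

/-- The expectation `E⁺_Λ[σ_{x 1} ⋯ σ_{x n}]` under the Ising measure on `Λ`
with plus boundary condition at inverse temperature `β`. -/
noncomputable def corr (β : ℝ) (Λ : Finset (ℤ × ℤ)) {n : ℕ} (x : Fin n → ℤ × ℤ) : ℝ :=
  (∑ ε : {z // z ∈ Λ} → Bool, weight β Λ ε * ∏ i, spinAt Λ ε (x i)) /
    (∑ ε : {z // z ∈ Λ} → Bool, weight β Λ ε)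

/-- The external boundary of a finite set `Γ ⊆ ℤ²`. -/
def extBd (Γ : Finset (ℤ × ℤ)) : Set (ℤ × ℤ) :=
  {y | y ∉ Γ ∧ ∃ z ∈ Γ, z ∈ nbrs y}

end IsingDecoupling

open IsingDecoupling

namespace Griffiths

open Real

def sgn (b : Bool) : ℝ := if b then 1 else -1

lemma sgn_beq (a b : Bool) : sgn (a == b) = sgn a * sgn b := by
  cases a <;> cases b <;> norm_num [sgn]

lemma sgn_mul_self (b : Bool) : sgn b * sgn b = 1 := by
  cases b <;> norm_num [sgn]

variable {V : Type*} [Fintype V]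

def spinMonomial (k : V → ℕ) (ε : V → Bool) : ℝ := ∏ v, sgn (ε v) ^ k v

@[simp]
lemma spinMonomial_zero (ε : V → Bool) : spinMonomial 0 ε = 1 := by
  simp [spinMonomial]

lemma spinMonomial_add (k l : V → ℕ) (ε : V → Bool) :
    spinMonomial (k + l) ε = spinMonomial k ε * spinMonomial l ε := by
  simp only [spinMonomial, Pi.add_apply, pow_add, Finset.prod_mul_distrib]

lemma prod_spinMonomial {ι : Type*} (s : Finset ι) (k : ι → V → ℕ) (ε : V → Bool) :
    ∏ i ∈ s, spinMonomial (k i) ε = spinMonomial (∑ i ∈ s, k i) ε := by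
  simp only [spinMonomial, Finset.sum_apply]
  rw [Finset.prod_comm]
  exact Finset.prod_congr rfl fun v _ => Finset.prod_pow_eq_pow_sum _ _ _

lemma spinMonomial_beq (k : V → ℕ) (ε s : V → Bool) :
    spinMonomial k (fun v => ε v == s v) = spinMonomial k ε * spinMonomial k s := by
  simp only [spinMonomial, sgn_beq, mul_pow, Finset.prod_mul_distrib]

lemma spinMonomial_eq_one_or_eq_neg_one (k : V → ℕ) (ε : V → Bool) :
    spinMonomial k ε = 1 ∨ spinMonomial k ε = -1 := by
  rw [← mul_self_eq_one_iff, ← spinMonomial_add, spinMonomial]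
  refine Finset.prod_eq_one fun v _ => ?_
  rw [Pi.add_apply, ← two_mul, pow_mul, sq, sgn_mul_self, one_pow]

lemma spinMonomial_le_one (k : V → ℕ) (ε : V → Bool) : spinMonomial k ε ≤ 1 := by
  rcases spinMonomial_eq_one_or_eq_neg_one k ε with h | h <;> norm_num [h]

lemma one_add_spinMonomial_nonneg (k : V → ℕ) (ε : V → Bool) : 0 ≤ 1 + spinMonomial k ε := by
  rcases spinMonomial_eq_one_or_eq_neg_one k ε with h | h <;> norm_num [h]

lemma exp_mul_spinMonomial (c : ℝ) (k : V → ℕ) (ε : V → Bool) :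
    exp (c * spinMonomial k ε) = cosh c + sinh c * spinMonomial k ε := by
  rcases spinMonomial_eq_one_or_eq_neg_one k ε with h | h <;> rw [h]
  · simp [cosh_add_sinh]
  · simp [← sub_eq_add_neg, cosh_sub_sinh]

variable {ι : Type*} [Fintype ι] [DecidableEq V]

lemma sum_spinMonomial_nonneg (k : V → ℕ) : 0 ≤ ∑ ε : V → Bool, spinMonomial k ε := by
  simp only [spinMonomial]
  rw [← Fintype.prod_sum fun v (b : Bool) => sgn b ^ k v]
  refine Finset.prod_nonneg fun v _ => ?_
  rcases (k v).even_or_odd with h | h <;> simp [sgn, h.neg_one_pow]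

noncomputable def boltzmann (J : ι → ℝ) (K : ι → V → ℕ) (ε : V → Bool) : ℝ :=
  exp (∑ i, J i * spinMonomial (K i) ε)

noncomputable def corrSum (J : ι → ℝ) (K : ι → V → ℕ) (m : V → ℕ) : ℝ :=
  ∑ ε, spinMonomial m ε * boltzmann J K ε

lemma corrSum_zero_pos (J : ι → ℝ) (K : ι → V → ℕ) : 0 < corrSum J K 0 := by
  simp only [corrSum, spinMonomial_zero, one_mul]
  exact Finset.sum_pos (fun ε _ => exp_pos _) Finset.univ_nonempty

/-- First Griffiths inequality. -/
theorem corrSum_nonneg {J : ι → ℝ} (hJ : ∀ i, 0 ≤ J i) (K : ι → V → ℕ) (m : V → ℕ) :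
    0 ≤ corrSum J K m := by
  classical
  -- `exp (J σ^K) = cosh J + sinh J σ^K` turns the weight into a polynomial in the spins
  -- with nonnegative coefficients.
  have expand : ∀ ε, boltzmann J K ε = ∑ T : Finset ι,
      ((∏ i ∈ T, sinh (J i)) * ∏ i ∈ Tᶜ, cosh (J i)) * spinMonomial (∑ i ∈ T, K i) ε := by
    intro ε
    simp only [boltzmann, exp_sum, exp_mul_spinMonomial, add_comm (cosh _), Fintype.prod_add,
      Finset.prod_mul_distrib, prod_spinMonomial]
    exact Finset.sum_congr rfl fun T _ => by ring
  simp only [corrSum, expand, Finset.mul_sum]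
  rw [Finset.sum_comm]
  refine Finset.sum_nonneg fun T _ => ?_
  simp only [mul_left_comm (spinMonomial m _), ← Finset.mul_sum, ← spinMonomial_add]
  refine mul_nonneg (mul_nonneg ?_ ?_) (sum_spinMonomial_nonneg _)
  · exact Finset.prod_nonneg fun i _ => sinh_nonneg_iff.mpr (hJ i)
  · exact Finset.prod_nonneg fun i _ => (cosh_pos _).le

/-- Ginibre's duplicated-variables identity: substituting `σ' = σ s` in the second factor. -/
lemma corrSum_mul_corrSum (J : ι → ℝ) (K : ι → V → ℕ) (k l : V → ℕ) :
    corrSum J K k * corrSum J K l = ∑ s : V → Bool,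
      spinMonomial l s * corrSum (fun i => J i * (1 + spinMonomial (K i) s)) K (k + l) := by
  have involutive : ∀ ε : V → Bool,
      Function.Involutive fun s : V → Bool => fun v => ε v == s v := by
    intro ε s
    funext v
    show (ε v == (ε v == s v)) = s v
    cases ε v <;> cases s v <;> rfl
  rw [corrSum, corrSum, Finset.sum_mul_sum]
  simp only [corrSum, Finset.mul_sum]
  conv_rhs => rw [Finset.sum_comm]
  refine Finset.sum_congr rfl fun ε _ => ?_
  rw [← (involutive ε).bijective.sum_comp]
  refine Finset.sum_congr rfl fun s _ => ?_
  have hexp : exp (∑ i, J i * spinMonomial (K i) ε) *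
      exp (∑ i, J i * (spinMonomial (K i) ε * spinMonomial (K i) s)) =
      exp (∑ i, J i * (1 + spinMonomial (K i) s) * spinMonomial (K i) ε) := by
    rw [← exp_add, ← Finset.sum_add_distrib]
    exact congrArg exp (Finset.sum_congr rfl fun i _ => by ring)
  simp only [boltzmann, spinMonomial_beq, spinMonomial_add, ← hexp]
  ring

/-- Second Griffiths inequality. -/
theorem corrSum_mul_corrSum_le {J : ι → ℝ} (hJ : ∀ i, 0 ≤ J i) (K : ι → V → ℕ)
    (k l : V → ℕ) : corrSum J K k * corrSum J K l ≤ corrSum J K (k + l) * corrSum J K 0 := by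
  rw [corrSum_mul_corrSum, corrSum_mul_corrSum, add_zero]
  refine Finset.sum_le_sum fun s _ => ?_
  rw [spinMonomial_zero, one_mul]
  refine mul_le_of_le_one_left (corrSum_nonneg (fun i => ?_) _ _) (spinMonomial_le_one l s)
  exact mul_nonneg (hJ i) (one_add_spinMonomial_nonneg _ _)

def plusOn (W : Finset V) : Finset (V → Bool) := {ε | ∀ v ∈ W, ε v = true}

lemma mem_plusOn {W : Finset V} {ε : V → Bool} : ε ∈ plusOn W ↔ ∀ v ∈ W, ε v = true := by
  simp [plusOn]

noncomputable def plusSum (J : ι → ℝ) (K : ι → V → ℕ) (W : Finset V) (m : V → ℕ) : ℝ :=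
  ∑ ε ∈ plusOn W, spinMonomial m ε * boltzmann J K ε

lemma plusSum_zero_pos (J : ι → ℝ) (K : ι → V → ℕ) (W : Finset V) : 0 < plusSum J K W 0 := by
  simp only [plusSum, spinMonomial_zero, one_mul]
  exact Finset.sum_pos (fun ε _ => exp_pos _) ⟨fun _ => true, mem_plusOn.mpr fun _ _ => rfl⟩

lemma prod_sgn_eq_spinMonomial (T : Finset V) (ε : V → Bool) :
    ∏ v ∈ T, sgn (ε v) = spinMonomial (fun v => if v ∈ T then 1 else 0) ε := by
  simp only [spinMonomial, pow_ite, pow_one, pow_zero]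
  rw [Finset.prod_ite_mem, Finset.univ_inter]

lemma sum_powerset_spinMonomial (W : Finset V) (ε : V → Bool) :
    ∑ T ∈ W.powerset, spinMonomial (fun v => if v ∈ T then 1 else 0) ε =
      if ∀ v ∈ W, ε v = true then 2 ^ #W else 0 := by
  simp only [← prod_sgn_eq_spinMonomial, ← Finset.prod_one_add]
  split_ifs with h
  · rw [Finset.prod_congr rfl fun v hv => by rw [h v hv, sgn, if_pos rfl, one_add_one_eq_two],
      Finset.prod_const]
  · push Not at h
    obtain ⟨v, hv, hfalse⟩ := h
    exact Finset.prod_eq_zero hv (by simp [sgn, hfalse])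

lemma two_pow_card_mul_plusSum (J : ι → ℝ) (K : ι → V → ℕ) (W : Finset V) (m : V → ℕ) :
    2 ^ #W * plusSum J K W m =
      ∑ T ∈ W.powerset, corrSum J K (m + fun v => if v ∈ T then 1 else 0) := by
  simp only [plusSum, corrSum, plusOn, Finset.mul_sum, Finset.sum_filter, spinMonomial_add]
  rw [Finset.sum_comm]
  refine Finset.sum_congr rfl fun ε _ => ?_
  simp only [mul_right_comm (spinMonomial m ε), ← Finset.mul_sum, sum_powerset_spinMonomial]
  split_ifs <;> ring

theorem corrSum_mul_plusSum_le {J : ι → ℝ} (hJ : ∀ i, 0 ≤ J i) (K : ι → V → ℕ)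
    (W : Finset V) (m : V → ℕ) :
    corrSum J K m * plusSum J K W 0 ≤ plusSum J K W m * corrSum J K 0 := by
  have h2 : (0 : ℝ) < 2 ^ #W := by positivity
  refine le_of_mul_le_mul_left ?_ h2
  calc 2 ^ #W * (corrSum J K m * plusSum J K W 0)
      = corrSum J K m * (2 ^ #W * plusSum J K W 0) := mul_left_comm _ _ _
    _ ≤ (2 ^ #W * plusSum J K W m) * corrSum J K 0 := by
      rw [two_pow_card_mul_plusSum, two_pow_card_mul_plusSum, Finset.mul_sum, Finset.sum_mul]
      exact Finset.sum_le_sum fun T _ => by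
        simpa only [zero_add] using corrSum_mul_corrSum_le hJ K m _
    _ = 2 ^ #W * (plusSum J K W m * corrSum J K 0) := mul_assoc _ _ _

theorem corrSum_div_le_plusSum_div {J : ι → ℝ} (hJ : ∀ i, 0 ≤ J i) (K : ι → V → ℕ)
    (W : Finset V) (m : V → ℕ) :
    corrSum J K m / corrSum J K 0 ≤ plusSum J K W m / plusSum J K W 0 := by
  rw [div_le_div_iff₀ (corrSum_zero_pos J K) (plusSum_zero_pos J K W)]
  exact corrSum_mul_plusSum_le hJ K W m

end Griffiths

namespace IsingDecoupling

open Griffiths Function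

lemma mem_nbrs_comm {x y : ℤ × ℤ} : y ∈ nbrs x ↔ x ∈ nbrs y := by
  simp only [nbrs, Finset.mem_insert, Finset.mem_singleton, Prod.ext_iff]
  omega

lemma spinAt_of_notMem {Γ : Finset (ℤ × ℤ)} (ε : Γ → Bool) {a : ℤ × ℤ} (ha : a ∉ Γ) :
    spinAt Γ ε a = 1 := by
  simp [spinAt, ha]

lemma spinAt_eq_prod (Γ : Finset (ℤ × ℤ)) (ε : Γ → Bool) (a : ℤ × ℤ) :
    spinAt Γ ε a = ∏ v : Γ, if (v : ℤ × ℤ) = a then sgn (ε v) else 1 := by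
  by_cases ha : a ∈ Γ
  · rw [Fintype.prod_eq_single ⟨a, ha⟩ fun v hv => if_neg fun h => hv (Subtype.ext h), if_pos rfl]
    simp [spinAt, ha, sgn]
  · rw [spinAt_of_notMem ε ha]
    exact (Finset.prod_eq_one fun v _ => if_neg fun h => ha (by rw [← h]; exact v.prop)).symm

def siteCount {ι : Type*} [Fintype ι] {Γ : Finset (ℤ × ℤ)} (x : ι → ℤ × ℤ) (v : Γ) : ℕ :=
  #{i | x i = v}

lemma prod_spinAt_eq_spinMonomial {ι : Type*} [Fintype ι] (Γ : Finset (ℤ × ℤ)) (ε : Γ → Bool)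
    (x : ι → ℤ × ℤ) : ∏ i, spinAt Γ ε (x i) = spinMonomial (siteCount x) ε := by
  simp only [spinAt_eq_prod, spinMonomial, siteCount]
  rw [Finset.prod_comm]
  refine Finset.prod_congr rfl fun v _ => ?_
  rw [← Finset.prod_filter, Finset.prod_const]
  simp only [eq_comm]

def bonds (Γ : Finset (ℤ × ℤ)) : Finset ((ℤ × ℤ) × (ℤ × ℤ)) :=
  Γ.biUnion fun x => (nbrs x).biUnion fun y => {(x, y), (y, x)}

lemma mem_bonds {Γ : Finset (ℤ × ℤ)} {p : (ℤ × ℤ) × (ℤ × ℤ)} :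
    p ∈ bonds Γ ↔ p.2 ∈ nbrs p.1 ∧ (p.1 ∈ Γ ∨ p.2 ∈ Γ) := by
  obtain ⟨a, b⟩ := p
  simp only [bonds, Finset.mem_biUnion, Finset.mem_insert, Finset.mem_singleton, Prod.mk.injEq]
  constructor
  · rintro ⟨x, hx, y, hy, ⟨rfl, rfl⟩ | ⟨rfl, rfl⟩⟩
    exacts [⟨hy, Or.inl hx⟩, ⟨mem_nbrs_comm.mp hy, Or.inr hx⟩]
  · rintro ⟨hab, ha | hb⟩
    exacts [⟨a, ha, b, hab, Or.inl ⟨rfl, rfl⟩⟩, ⟨b, hb, a, mem_nbrs_comm.mp hab, Or.inr ⟨rfl, rfl⟩⟩]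

lemma sum_bonds (Γ : Finset (ℤ × ℤ)) (f : (ℤ × ℤ) × (ℤ × ℤ) → ℝ) :
    ∑ p ∈ bonds Γ, f p =
      ∑ x ∈ Γ, ∑ y ∈ nbrs x, f (x, y) + ∑ x ∈ Γ, ∑ y ∈ (nbrs x).filter (· ∉ Γ), f (y, x) := by
  rw [← Finset.sum_filter_add_sum_filter_not (bonds Γ) (·.1 ∈ Γ)]
  congr 1
  · refine Finset.sum_finset_product _ _ _ fun p => ?_
    simp only [Finset.mem_filter, mem_bonds]
    tauto
  · refine Finset.sum_finset_product_right _ _ _ fun p => ?_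
    simp only [Finset.mem_filter, mem_bonds, mem_nbrs_comm (x := p.1)]
    tauto

lemma bonds_mono {U Λ : Finset (ℤ × ℤ)} (h : U ⊆ Λ) : bonds U ⊆ bonds Λ := fun p hp => by
  rw [mem_bonds] at hp ⊢
  exact ⟨hp.1, hp.2.imp (@h _) (@h _)⟩

lemma bonds_biUnion {ι : Type*} (s : Finset ι) (Λi : ι → Finset (ℤ × ℤ)) :
    bonds (s.biUnion Λi) = s.biUnion fun i => bonds (Λi i) := by
  ext p
  simp only [mem_bonds, Finset.mem_biUnion]
  constructor
  · rintro ⟨hp, ⟨i, hi, h1⟩ | ⟨i, hi, h2⟩⟩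
    exacts [⟨i, hi, hp, Or.inl h1⟩, ⟨i, hi, hp, Or.inr h2⟩]
  · rintro ⟨i, hi, hp, h1 | h2⟩
    exacts [⟨hp, Or.inl ⟨i, hi, h1⟩⟩, ⟨hp, Or.inr ⟨i, hi, h2⟩⟩]

lemma disjoint_bonds {Γ₁ Γ₂ : Finset (ℤ × ℤ)} (h : ∀ z ∈ Γ₁, z ∉ Γ₂ ∧ z ∉ extBd Γ₂) :
    Disjoint (bonds Γ₁) (bonds Γ₂) := by
  rw [Finset.disjoint_left]
  rintro ⟨a, b⟩ h₁ h₂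
  rw [mem_bonds] at h₁ h₂
  obtain ⟨hab, h₂⟩ := h₂
  rcases h₁.2 with ha | hb
  · obtain ⟨ha₂, ha_bd⟩ := h a ha
    exact ha_bd ⟨ha₂, b, h₂.resolve_left ha₂, hab⟩
  · obtain ⟨hb₂, hb_bd⟩ := h b hb
    exact hb_bd ⟨hb₂, a, h₂.resolve_right hb₂, mem_nbrs_comm.mp hab⟩

/-- The Hamiltonian of `Γ`, boundary spins read off `g`: every nearest-neighbour edge meeting `Γ`
appears as two ordered pairs. -/
noncomputable def energy (Γ : Finset (ℤ × ℤ)) (g : ℤ × ℤ → ℝ) : ℝ :=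
  (∑ p ∈ bonds Γ, g p.1 * g p.2) / 2

lemma weight_eq_exp_energy (β : ℝ) (Γ : Finset (ℤ × ℤ)) (ε : Γ → Bool) :
    weight β Γ ε = Real.exp (β * energy Γ (spinAt Γ ε)) := by
  have outside : ∀ x, ∑ y ∈ (nbrs x).filter (· ∉ Γ), spinAt Γ ε x * spinAt Γ ε y =
      #((nbrs x).filter (· ∉ Γ)) * spinAt Γ ε x := by
    intro x
    rw [Finset.sum_congr rfl fun y hy => by
      rw [spinAt_of_notMem ε (Finset.mem_filter.mp hy).2, mul_one], Finset.sum_const, nsmul_eq_mul]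
  have split : ∀ x, ∑ y ∈ nbrs x, spinAt Γ ε x * spinAt Γ ε y =
      ∑ y ∈ Γ.filter (· ∈ nbrs x), spinAt Γ ε x * spinAt Γ ε y +
        #((nbrs x).filter (· ∉ Γ)) * spinAt Γ ε x := by
    intro x
    rw [← Finset.sum_filter_add_sum_filter_not (nbrs x) (· ∈ Γ), outside]
    congr 2
    ext y
    simp [and_comm]
  simp only [weight, energy, sum_bonds, split, mul_comm (spinAt Γ ε _) (spinAt Γ ε _), outside,
    Finset.sum_add_distrib]
  ring_nf

def Separated {ι : Type*} (Λi : ι → Finset (ℤ × ℤ)) : Prop :=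
  ∀ i j, i ≠ j → ∀ z ∈ Λi i, z ∉ Λi j ∧ z ∉ extBd (Λi j)

lemma Separated.pairwise_disjoint {ι : Type*} {Λi : ι → Finset (ℤ × ℤ)} (h : Separated Λi) :
    Pairwise (Disjoint on Λi) := fun i j hij =>
  Finset.disjoint_left.mpr fun {z} hz => (h i j hij z hz).1

lemma Separated.notMem_biUnion {ι : Type*} [Fintype ι] {Λi : ι → Finset (ℤ × ℤ)}
    (h : Separated Λi) {i : ι} {z y : ℤ × ℤ} (hz : z ∈ Λi i) (hy : y ∈ nbrs z) (hyi : y ∉ Λi i) :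
    y ∉ Finset.univ.biUnion Λi := by
  simp only [Finset.mem_biUnion, Finset.mem_univ, true_and, not_exists]
  intro j hyj
  obtain ⟨hzj, hz_bd⟩ := h i j (fun hij => hyi (hij ▸ hyj)) z hz
  exact hz_bd ⟨hzj, y, hyj, hy⟩

lemma energy_biUnion {ι : Type*} [Fintype ι] {Λi : ι → Finset (ℤ × ℤ)} (h : Separated Λi)
    (g : ℤ × ℤ → ℝ) : energy (Finset.univ.biUnion Λi) g = ∑ i, energy (Λi i) g := by
  rw [energy, bonds_biUnion, Finset.sum_biUnion fun i _ j _ hij => disjoint_bonds (h i j hij),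
    Finset.sum_div]
  rfl

lemma energy_eq_energy_add {U Λ : Finset (ℤ × ℤ)} (hU : U ⊆ Λ) {g : ℤ × ℤ → ℝ}
    (hg : ∀ z ∉ U, g z = 1) : energy Λ g = energy U g + #(bonds Λ \ bonds U) / 2 := by
  have outside : ∀ p ∈ bonds Λ \ bonds U, g p.1 * g p.2 = 1 := by
    intro p hp
    simp only [Finset.mem_sdiff, mem_bonds, not_and, not_or] at hp
    obtain ⟨hpU₁, hpU₂⟩ := hp.2 hp.1.1
    rw [hg _ hpU₁, hg _ hpU₂, mul_one]
  rw [energy, energy, ← Finset.sum_sdiff (bonds_mono hU), Finset.sum_congr rfl outside,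
    Finset.sum_const, nsmul_one]
  ring

lemma energy_congr {Γ : Finset (ℤ × ℤ)} {g g' : ℤ × ℤ → ℝ}
    (h : ∀ z ∈ Γ, g z = g' z ∧ ∀ y ∈ nbrs z, g y = g' y) : energy Γ g = energy Γ g' := by
  refine congrArg (· / 2) (Finset.sum_congr rfl fun p hp => ?_)
  rw [mem_bonds] at hp
  rcases hp with ⟨hp, h₁ | h₂⟩
  · rw [(h _ h₁).1, (h _ h₁).2 _ hp]
  · rw [(h _ h₂).1, (h _ h₂).2 _ (mem_nbrs_comm.mp hp)]

/-- The two spins of a bond; a site outside `Γ` is a `+1` boundary spin and does not occur. -/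
def bondCount (Γ : Finset (ℤ × ℤ)) (p : bonds Γ) : Γ → ℕ :=
  siteCount ![p.1.1, p.1.2]

lemma weight_eq_boltzmann (β : ℝ) (Γ : Finset (ℤ × ℤ)) (ε : Γ → Bool) :
    weight β Γ ε = boltzmann (fun _ => β / 2) (bondCount Γ) ε := by
  rw [weight_eq_exp_energy, boltzmann, energy]
  congr 1
  simp only [bondCount, ← prod_spinAt_eq_spinMonomial, Fin.prod_univ_two, Matrix.cons_val_zero,
    Matrix.cons_val_one, ← Finset.mul_sum,
    Finset.sum_coe_sort (bonds Γ) fun p => spinAt Γ ε p.1 * spinAt Γ ε p.2]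
  ring

lemma corr_eq_corrSum_div (β : ℝ) (Γ : Finset (ℤ × ℤ)) {n : ℕ} (x : Fin n → ℤ × ℤ) :
    corr β Γ x = corrSum (fun _ => β / 2) (bondCount Γ) (siteCount x) /
      corrSum (fun _ => β / 2) (bondCount Γ) 0 := by
  simp only [corr, corrSum, weight_eq_boltzmann, prod_spinAt_eq_spinMonomial, spinMonomial_zero,
    one_mul, mul_comm (boltzmann _ _ _)]

theorem corr_nonneg {β : ℝ} (hβ : 0 ≤ β) (Γ : Finset (ℤ × ℤ)) {n : ℕ} (x : Fin n → ℤ × ℤ) :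
    0 ≤ corr β Γ x := by
  rw [corr_eq_corrSum_div]
  exact div_nonneg (corrSum_nonneg (fun _ => by positivity) _ _) (corrSum_zero_pos _ _).le

noncomputable def plusCorr (β : ℝ) (Γ : Finset (ℤ × ℤ)) (W : Finset Γ) {ι : Type*} [Fintype ι]
    (x : ι → ℤ × ℤ) : ℝ :=
  (∑ ε ∈ plusOn W, weight β Γ ε * ∏ i, spinAt Γ ε (x i)) / ∑ ε ∈ plusOn W, weight β Γ ε

lemma plusCorr_eq_plusSum_div (β : ℝ) (Γ : Finset (ℤ × ℤ)) (W : Finset Γ) {ι : Type*} [Fintype ι]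
    (x : ι → ℤ × ℤ) :
    plusCorr β Γ W x = plusSum (fun _ => β / 2) (bondCount Γ) W (siteCount x) /
      plusSum (fun _ => β / 2) (bondCount Γ) W 0 := by
  simp only [plusCorr, plusSum, weight_eq_boltzmann, prod_spinAt_eq_spinMonomial,
    spinMonomial_zero, one_mul, mul_comm (boltzmann _ _ _)]

theorem corr_le_plusCorr {β : ℝ} (hβ : 0 ≤ β) (Γ : Finset (ℤ × ℤ)) (W : Finset Γ) {n : ℕ}
    (x : Fin n → ℤ × ℤ) : corr β Γ x ≤ plusCorr β Γ W x := by
  rw [corr_eq_corrSum_div, plusCorr_eq_plusSum_div]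
  exact corrSum_div_le_plusSum_div (fun _ => by positivity) _ W _

lemma sum_plusOn_restrict₂ {α ι : Type*} [DecidableEq α] [Fintype ι] [DecidableEq ι]
    {Λ : Finset α} {Λi : ι → Finset α} (hsub : ∀ i, Λi i ⊆ Λ) (hdisj : Pairwise (Disjoint on Λi))
    (G : (∀ i, Λi i → Bool) → ℝ) :
    ∑ ε ∈ plusOn {v : Λ | ↑v ∉ Finset.univ.biUnion Λi},
        G (fun i => Finset.restrict₂ (π := fun _ => Bool) (hsub i) ε) = ∑ δ, G δ := by
  -- `glue δ v = δ i v` for the block `i` containing `v`, unique by disjointness,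
  -- and `true` off the blocks
  let glue : (∀ i, Λi i → Bool) → Λ → Bool := fun δ v =>
    decide (∀ i (h : (v : α) ∈ Λi i), δ i ⟨v, h⟩ = true)
  refine Finset.sum_nbij' (fun ε i => Finset.restrict₂ (π := fun _ => Bool) (hsub i) ε) glue
    (fun _ _ => Finset.mem_univ _) (fun δ _ => ?_) (fun ε hε => ?_) (fun δ _ => ?_)
    (fun _ _ => rfl)
  · simp only [mem_plusOn, Finset.mem_filter, Finset.mem_univ, true_and, Finset.mem_biUnion,
      not_exists, glue]
    exact fun v hv => decide_eq_true fun i h => absurd h (hv i)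
  · rw [mem_plusOn] at hε
    funext v
    by_cases hv : ∃ i, (v : α) ∈ Λi i
    · obtain ⟨i, hi⟩ := hv
      have key : (∀ j, (v : α) ∈ Λi j → ε v = true) ↔ ε v = true :=
        ⟨fun h => h i hi, fun h _ _ => h⟩
      simp [glue, Finset.restrict₂, key]
    · have hplus : ε v = true := hε v (by simpa using hv)
      simp_all [glue]
  · funext i z
    have hblock : ∀ j, (z : α) ∈ Λi j → j = i := fun j hj =>
      hdisj.eq (Finset.not_disjoint_iff.mpr ⟨z, hj, z.2⟩)
    have key : (∀ j (h : (z : α) ∈ Λi j), δ j ⟨z, h⟩ = true) ↔ δ i z = true :=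
      ⟨fun h => h i z.2, fun h j hj => by obtain rfl := hblock j hj; exact h⟩
    simp [Finset.restrict₂, glue, key]

lemma spinAt_restrict₂ {s t : Finset (ℤ × ℤ)} (h : s ⊆ t) (ε : t → Bool) {z : ℤ × ℤ} (hz : z ∈ s) :
    spinAt s (Finset.restrict₂ (π := fun _ => Bool) h ε) z = spinAt t ε z := by
  simp only [spinAt, hz, h hz, dite_true]
  rfl

section Blocks

variable {β : ℝ} {Λ : Finset (ℤ × ℤ)} {ι : Type*} [Fintype ι] {Λi : ι → Finset (ℤ × ℤ)}

lemma weight_eq_mul_prod_weight (hsub : ∀ i, Λi i ⊆ Λ) (hsep : Separated Λi) {ε : Λ → Bool}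
    (hε : ε ∈ plusOn {v : Λ | ↑v ∉ Finset.univ.biUnion Λi}) :
    weight β Λ ε = Real.exp (β * (#(bonds Λ \ bonds (Finset.univ.biUnion Λi)) / 2)) *
      ∏ i, weight β (Λi i) (Finset.restrict₂ (π := fun _ => Bool) (hsub i) ε) := by
  have plus_off : ∀ z ∉ Finset.univ.biUnion Λi, spinAt Λ ε z = 1 := by
    intro z hz
    by_cases hzΛ : z ∈ Λ
    · have : ε ⟨z, hzΛ⟩ = true := mem_plusOn.mp hε _ (by simpa using hz)
      simp [spinAt, hzΛ, this]
    · exact spinAt_of_notMem ε hzΛ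
  have block : ∀ i, energy (Λi i) (spinAt Λ ε) =
      energy (Λi i) (spinAt (Λi i) (Finset.restrict₂ (π := fun _ => Bool) (hsub i) ε)) := by
    intro i
    have inside : ∀ z ∈ Λi i, spinAt Λ ε z =
        spinAt (Λi i) (Finset.restrict₂ (π := fun _ => Bool) (hsub i) ε) z := fun z hz =>
      (spinAt_restrict₂ (hsub i) ε hz).symm
    refine energy_congr fun z hz => ⟨inside z hz, fun y hy => ?_⟩
    by_cases hyi : y ∈ Λi i
    · exact inside y hyi
    · rw [plus_off y (hsep.notMem_biUnion hz hy hyi), spinAt_of_notMem _ hyi]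
  simp only [weight_eq_exp_energy]
  rw [energy_eq_energy_add (Finset.biUnion_subset.mpr fun i _ => hsub i) plus_off,
    energy_biUnion hsep, ← Real.exp_sum, ← Real.exp_add]
  simp only [block, mul_add, Finset.mul_sum]
  ring_nf

variable [DecidableEq ι]

lemma sum_plusOn_prod_mul_weight (hsub : ∀ i, Λi i ⊆ Λ) (hsep : Separated Λi)
    (f : ∀ i, (Λi i → Bool) → ℝ) :
    ∑ ε ∈ plusOn {v : Λ | ↑v ∉ Finset.univ.biUnion Λi},
        (∏ i, f i (Finset.restrict₂ (π := fun _ => Bool) (hsub i) ε)) * weight β Λ ε =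
      Real.exp (β * (#(bonds Λ \ bonds (Finset.univ.biUnion Λi)) / 2)) *
        ∏ i, ∑ δ, f i δ * weight β (Λi i) δ := by
  rw [Finset.sum_congr rfl fun ε hε => by rw [weight_eq_mul_prod_weight hsub hsep hε],
    Fintype.prod_sum]
  simp only [mul_left_comm (∏ i, f i _), ← Finset.mul_sum, ← Finset.prod_mul_distrib]
  rw [sum_plusOn_restrict₂ hsub hsep.pairwise_disjoint
    fun δ => ∏ i, f i (δ i) * weight β (Λi i) (δ i)]

theorem plusCorr_eq_prod_corr (hsub : ∀ i, Λi i ⊆ Λ) (hsep : Separated Λi) {x : ι → ℤ × ℤ}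
    (hmem : ∀ i, x i ∈ Λi i) :
    plusCorr β Λ {v | ↑v ∉ Finset.univ.biUnion Λi} x =
      ∏ i, corr β (Λi i) (fun _ : Fin 1 => x i) := by
  have spins : ∀ ε : Λ → Bool, ∏ i, spinAt Λ ε (x i) =
      ∏ i, spinAt (Λi i) (Finset.restrict₂ (π := fun _ => Bool) (hsub i) ε) (x i) := fun ε =>
    Finset.prod_congr rfl fun i _ => (spinAt_restrict₂ (hsub i) ε (hmem i)).symm
  have num := sum_plusOn_prod_mul_weight (β := β) hsub hsep fun i δ => spinAt (Λi i) δ (x i)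
  have den := sum_plusOn_prod_mul_weight (β := β) hsub hsep fun _ _ => 1
  simp only [Finset.prod_const_one, one_mul] at den
  simp only [plusCorr, mul_comm (weight β Λ _), spins, num, den]
  rw [mul_div_mul_left _ _ (Real.exp_ne_zero _), ← Finset.prod_div_distrib]
  simp only [corr, Fin.prod_univ_one, mul_comm (weight _ _ _)]

end Blocks

end IsingDecoupling

theorem ising_decoupling_inequality_general
    (β : ℝ) (hβ : 0 ≤ β) (Λ : Finset (ℤ × ℤ)) (n : ℕ)
    (x : Fin n → ℤ × ℤ)
    (Λi : Fin n → Finset (ℤ × ℤ))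
    (hmem : ∀ i, x i ∈ Λi i) (hsub : ∀ i, Λi i ⊆ Λ)
    (hdisj : ∀ i j, i ≠ j → ∀ z ∈ Λi i, z ∉ Λi j ∧ z ∉ extBd (Λi j)) :
    0 ≤ corr β Λ x ∧
      corr β Λ x ≤ ∏ i, corr β (Λi i) (fun _ : Fin 1 => x i) :=
  ⟨corr_nonneg hβ Λ x,
    (corr_le_plusCorr hβ Λ _ x).trans_eq (plusCorr_eq_prod_corr hsub hdisj hmem)⟩

/-- **Decoupling inequality for the Ising model with plus boundary condition.**
Fix `β ≥ 0` and a finite `Λ ⊆ ℤ²`.  If `x₁, …, x_n` are distinct points with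
`x_i ∈ Λᵢ ⊆ Λ` and `Λᵢ ∩ (Λⱼ ∪ ∂Λⱼ) = ∅` for `i ≠ j`, then
`0 ≤ E⁺_Λ[σ_{x₁} ⋯ σ_{x_n}] ≤ ∏ᵢ E⁺_{Λᵢ}[σ_{x_i}]`. -/
theorem ising_decoupling_inequality
    (β : ℝ) (hβ : 0 ≤ β) (Λ : Finset (ℤ × ℤ)) (n : ℕ)
    (x : Fin n → ℤ × ℤ) (hx : Function.Injective x)
    (Λi : Fin n → Finset (ℤ × ℤ))
    (hmem : ∀ i, x i ∈ Λi i) (hsub : ∀ i, Λi i ⊆ Λ)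
    (hdisj : ∀ i j, i ≠ j → ∀ z ∈ Λi i, z ∉ Λi j ∧ z ∉ extBd (Λi j)) :
    0 ≤ corr β Λ x ∧
      corr β Λ x ≤ ∏ i, corr β (Λi i) (fun _ : Fin 1 => x i) :=
  ising_decoupling_inequality_general β hβ Λ n x Λi hmem hsub hdisj
end
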